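/- arXiv:2412.03000 — 6 statements merged into one kernel-verified Lean document; each statement's English description precedes it below -/
import Mathlib

section
/- Let m, n be positive integers and let x_k = (x_{k,1},…,x_{k,n}) ∈ ℝ^n for k = 1,…,2m. Define the array A(r_1,…,r_{2m}) = exp(x_{1,r_1} x_{2,r_2} ⋯ x_{2m,r_{2m}}) for (r_1,…,r_{2m}) ∈ {1,…,n}^{2m}. Then Det(A) = ∑_{i_1 > i_2 > ⋯ > i_n ≥ 0} (1/(i_1! i_2! ⋯ i_n!)) ∏_{k=1}^{2m} det( (x_{k,r})^{i_s} )_{1≤r,s≤n}, where the sum runs over all strictly decreasing n-tuples of nonnegative integers and converges absolutely. -/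
open scoped BigOperators

/-- Cayley's first hyperdeterminant of a real `2m`-dimensional array of size `n`
in each direction. -/
noncomputable def hyperDet (m n : ℕ) (A : (Fin (2 * m) → Fin n) → ℝ) : ℝ :=
  ((n.factorial : ℕ) : ℝ)⁻¹ *
    ∑ σ : Fin (2 * m) → Equiv.Perm (Fin n),
      (∏ k : Fin (2 * m), ((Equiv.Perm.sign (σ k) : ℤ) : ℝ)) *
        ∏ j : Fin n, A (fun k => σ k j)

section Aux

set_option linter.unnecessarySeqFocus false

open Finset in
private lemma prod_tsum_pi {n : ℕ} (g : Fin n → ℕ → ℝ)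
    (hg : ∀ j, Summable fun i => ‖g j i‖) :
    Summable (fun i : Fin n → ℕ => ‖∏ j, g j (i j)‖) ∧
      (∏ j, ∑' i : ℕ, g j i) = ∑' i : Fin n → ℕ, ∏ j, g j (i j) := by
  induction n with
  | zero =>
    haveI : Unique (Fin 0 → ℕ) := ⟨⟨fun i => i.elim0⟩, fun f => funext fun i => i.elim0⟩
    constructor
    · exact Summable.of_finite
    · rw [tsum_eq_single (fun i => i.elim0 : Fin 0 → ℕ)
        (fun b hb => (hb (funext fun i => i.elim0)).elim)] <;> simp
  | succ n ih =>
    obtain ⟨hsum, htsum⟩ := ih (fun j => g j.succ) (fun j => hg j.succ)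
    have h0 := hg 0
    set Gn : (Fin n → ℕ) → ℝ := fun i => ∏ j, g j.succ (i j) with hGn
    have hprodsum : Summable (fun p : ℕ × (Fin n → ℕ) => ‖g 0 p.1 * Gn p.2‖) := by
      have := summable_mul_of_summable_norm (f := fun i => ‖g 0 i‖) (g := fun i => ‖Gn i‖)
        (by simpa only [norm_norm] using h0) (by simpa only [norm_norm] using hsum)
      simpa [norm_mul] using this
    have key : ∀ p : ℕ × (Fin n → ℕ),
        (∏ j, g j ((Fin.cons p.1 p.2 : Fin (n+1) → ℕ) j)) = g 0 p.1 * Gn p.2 := by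
      intro p
      rw [Fin.prod_univ_succ]
      simp [hGn]
    constructor
    · rw [← (Fin.consEquiv (fun _ : Fin (n + 1) => ℕ)).summable_iff]
      refine Summable.congr hprodsum ?_
      intro p
      simp only [Function.comp]
      rw [show ((Fin.consEquiv fun _ : Fin (n+1) => ℕ) ⟨p.1, p.2⟩)
          = (Fin.cons p.1 p.2 : Fin (n+1) → ℕ) from rfl, key p, norm_mul]
    · rw [Fin.prod_univ_succ, htsum,
        tsum_mul_tsum_of_summable_norm h0 hsum,
        ← (Fin.consEquiv (fun _ : Fin (n + 1) => ℕ)).tsum_eq]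
      exact tsum_congr fun p => (key p).symm

private lemma exp_tsum (t : ℝ) : Real.exp t = ∑' i : ℕ, t ^ i / (i.factorial : ℝ) := by
  rw [Real.exp_eq_exp_ℝ, NormedSpace.exp_eq_tsum_div]

private lemma summable_norm_pow_div_fact (t : ℝ) :
    Summable fun i : ℕ => ‖t ^ i / (i.factorial : ℝ)‖ := by
  refine (Real.summable_pow_div_factorial |t|).congr fun i => ?_
  rw [norm_div, norm_pow, Real.norm_eq_abs, Real.norm_natCast]

private lemma prod_exp_eq_tsum {n : ℕ} (t : Fin n → ℝ) :
    Summable (fun i : Fin n → ℕ => ‖∏ j, t j ^ (i j) / ((i j).factorial : ℝ)‖) ∧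
      (∏ j, Real.exp (t j)) = ∑' i : Fin n → ℕ, ∏ j, t j ^ (i j) / ((i j).factorial : ℝ) := by
  obtain ⟨h1, h2⟩ := prod_tsum_pi (fun j i => t j ^ i / (i.factorial : ℝ))
    (fun j => summable_norm_pow_div_fact (t j))
  exact ⟨h1, by rw [← h2]; exact Finset.prod_congr rfl fun j _ => exp_tsum (t j)⟩

/-- The general term of the expansion. -/
private noncomputable def Fterm (m n : ℕ) (x : Fin (2 * m) → Fin n → ℝ) (i : Fin n → ℕ) : ℝ :=
  (∏ j : Fin n, ((Nat.factorial (i j) : ℝ)))⁻¹ *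
    ∏ k : Fin (2 * m), Matrix.det (Matrix.of fun r s : Fin n => x k r ^ (i s))

private lemma abs_det_le (m n : ℕ) (x : Fin (2 * m) → Fin n → ℝ) {C : ℝ}
    (hC : ∀ k r, |x k r| ≤ C) (hC1 : (0:ℝ) ≤ C) (k : Fin (2 * m)) (i : Fin n → ℕ) :
    |Matrix.det (Matrix.of fun r s : Fin n => x k r ^ (i s))| ≤
      (n.factorial : ℝ) * ∏ j : Fin n, C ^ i j := by
  clear hC1
  rw [Matrix.det_apply']
  refine (Finset.abs_sum_le_sum_abs _ _).trans ?_
  have : ∀ σ : Equiv.Perm (Fin n),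
      |((Equiv.Perm.sign σ : ℤ) : ℝ) *
          ∏ j : Fin n, (Matrix.of fun r s : Fin n => x k r ^ (i s)) (σ j) j|
        ≤ ∏ j : Fin n, C ^ i j := by
    intro σ
    rw [abs_mul]
    have he : |((Equiv.Perm.sign σ : ℤ) : ℝ)| = 1 := by
      rcases Int.units_eq_one_or (Equiv.Perm.sign σ) with h | h <;> simp [h]
    rw [he, one_mul, Finset.abs_prod]
    refine Finset.prod_le_prod (fun j _ => abs_nonneg _) fun j _ => ?_
    rw [Matrix.of_apply, abs_pow]
    exact pow_le_pow_left₀ (abs_nonneg _) (hC k _) _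
  refine (Finset.sum_le_sum fun σ _ => this σ).trans ?_
  rw [Finset.sum_const, Finset.card_univ, Fintype.card_perm, nsmul_eq_mul, Fintype.card_fin]

private lemma Fterm_summable (m n : ℕ) (x : Fin (2 * m) → Fin n → ℝ) :
    Summable fun i : Fin n → ℕ => ‖Fterm m n x i‖ := by
  set C : ℝ := 1 + ∑ k : Fin (2 * m), ∑ r : Fin n, |x k r| with hCdef
  have hC0 : (0:ℝ) ≤ C := by positivity
  have hC : ∀ k r, |x k r| ≤ C := by
    intro k r
    have h1 : |x k r| ≤ ∑ r' : Fin n, |x k r'| :=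
      Finset.single_le_sum (fun r' _ => abs_nonneg (x k r')) (Finset.mem_univ r)
    have h2 : (∑ r' : Fin n, |x k r'|) ≤ ∑ k' : Fin (2 * m), ∑ r' : Fin n, |x k' r'| :=
      Finset.single_le_sum (fun k' _ => Finset.sum_nonneg fun r' _ => abs_nonneg (x k' r'))
        (Finset.mem_univ k)
    linarith
  set D : ℝ := C ^ (2 * m) with hDdef
  have hg := (prod_tsum_pi (n := n) (fun _ i => D ^ i / (i.factorial : ℝ))
    (fun _ => summable_norm_pow_div_fact D)).1
  refine Summable.of_nonneg_of_le (fun i => norm_nonneg _) (fun i => ?_)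
    (hg.mul_left ((n.factorial : ℝ) ^ (2 * m)))
  have hbd : ‖Fterm m n x i‖ ≤
      (∏ j : Fin n, ((Nat.factorial (i j) : ℝ)))⁻¹ *
        ((n.factorial : ℝ) * ∏ j : Fin n, C ^ i j) ^ (2 * m) := by
    have hfactnn : (0:ℝ) ≤ ∏ j : Fin n, ((Nat.factorial (i j) : ℝ)) := by positivity
    rw [Fterm, norm_mul, norm_inv, Real.norm_eq_abs, Real.norm_eq_abs, abs_of_nonneg hfactnn]
    refine mul_le_mul_of_nonneg_left ?_ (by positivity)
    rw [Finset.abs_prod]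
    refine (Finset.prod_le_prod (fun k _ => abs_nonneg _)
      (fun k _ => abs_det_le m n x hC hC0 k i)).trans (le_of_eq ?_)
    rw [Finset.prod_const, Finset.card_univ, Fintype.card_fin]
  refine hbd.trans (le_of_eq ?_)
  rw [Real.norm_eq_abs, abs_of_nonneg (Finset.prod_nonneg fun j _ => by positivity),
    mul_pow, ← mul_assoc, mul_comm _ ((n.factorial : ℝ) ^ (2 * m)), mul_assoc,
    ← Finset.prod_pow, ← Finset.prod_inv_distrib, ← Finset.prod_mul_distrib]
  congr 1
  refine Finset.prod_congr rfl fun j _ => ?_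
  rw [hDdef, ← pow_mul, ← pow_mul, Nat.mul_comm (i j) (2 * m), div_eq_mul_inv, mul_comm]

private lemma sum_perm_eq_Fterm (m n : ℕ) (x : Fin (2 * m) → Fin n → ℝ) (i : Fin n → ℕ) :
    ∑ σ : Fin (2 * m) → Equiv.Perm (Fin n),
      (∏ k : Fin (2 * m), ((Equiv.Perm.sign (σ k) : ℤ) : ℝ)) *
        ∏ j : Fin n, (∏ k : Fin (2 * m), x k (σ k j)) ^ (i j) / ((i j).factorial : ℝ)
      = Fterm m n x i := by
  have h1 : ∀ σ : Fin (2 * m) → Equiv.Perm (Fin n),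
      (∏ k : Fin (2 * m), ((Equiv.Perm.sign (σ k) : ℤ) : ℝ)) *
        ∏ j : Fin n, (∏ k : Fin (2 * m), x k (σ k j)) ^ (i j) / ((i j).factorial : ℝ)
      = (∏ j : Fin n, ((Nat.factorial (i j) : ℝ)))⁻¹ *
          ∏ k : Fin (2 * m), (((Equiv.Perm.sign (σ k) : ℤ) : ℝ) *
            ∏ j : Fin n, x k (σ k j) ^ (i j)) := by
    intro σ
    rw [Finset.prod_div_distrib, Finset.prod_mul_distrib]
    have h2 : (∏ j : Fin n, (∏ k : Fin (2 * m), x k (σ k j)) ^ (i j))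
        = ∏ k : Fin (2 * m), ∏ j : Fin n, x k (σ k j) ^ (i j) := by
      rw [Finset.prod_comm]
      exact Finset.prod_congr rfl fun j _ => by rw [← Finset.prod_pow]
    rw [h2]
    ring
  rw [Finset.sum_congr rfl fun σ _ => h1 σ, ← Finset.mul_sum]
  congr 1
  rw [← Fintype.piFinset_univ,
    ← Finset.prod_univ_sum (fun _ : Fin (2 * m) => (Finset.univ : Finset (Equiv.Perm (Fin n))))
      (fun k τ => ((Equiv.Perm.sign τ : ℤ) : ℝ) * ∏ j : Fin n, x k (τ j) ^ (i j))]
  refine Finset.prod_congr rfl fun k _ => ?_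
  rw [Matrix.det_apply']
  rfl

private lemma Fterm_comp_perm (m n : ℕ) (x : Fin (2 * m) → Fin n → ℝ) (i : Fin n → ℕ)
    (π : Equiv.Perm (Fin n)) : Fterm m n x (i ∘ π) = Fterm m n x i := by
  unfold Fterm
  congr 1
  · have h := Equiv.prod_comp π fun j => ((Nat.factorial (i j) : ℝ))
    rw [← h]
    rfl
  · have hdet : ∀ k, Matrix.det (Matrix.of fun r s : Fin n => x k r ^ ((i ∘ π) s))
        = ((Equiv.Perm.sign π : ℤ) : ℝ) *
          Matrix.det (Matrix.of fun r s : Fin n => x k r ^ (i s)) := by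
      intro k
      have : (Matrix.of fun r s : Fin n => x k r ^ ((i ∘ π) s))
          = (Matrix.of fun r s : Fin n => x k r ^ (i s)).submatrix id π := rfl
      rw [this, Matrix.det_permute']
    rw [Finset.prod_congr rfl fun k _ => hdet k, Finset.prod_mul_distrib,
      Finset.prod_const, Finset.card_univ, Fintype.card_fin]
    rcases Int.units_eq_one_or (Equiv.Perm.sign π) with h | h <;>
      simp [h, pow_mul]

private lemma Fterm_eq_zero (m n : ℕ) (hm : 0 < m) (x : Fin (2 * m) → Fin n → ℝ)
    (i : Fin n → ℕ) (hi : ¬ Function.Injective i) : Fterm m n x i = 0 := by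
  rw [Function.not_injective_iff] at hi
  obtain ⟨a, b, hab, hne⟩ := hi
  unfold Fterm
  rw [Finset.prod_eq_zero (Finset.mem_univ (⟨0, by omega⟩ : Fin (2 * m)))
    (Matrix.det_zero_of_column_eq hne fun r => by simp [hab]), mul_zero]

private lemma strictAnti_eq_of_comp_perm {n : ℕ} {f g : Fin n → ℕ} (hf : StrictAnti f)
    (hg : StrictAnti g) {π ρ : Equiv.Perm (Fin n)} (h : f ∘ π = g ∘ ρ) : f = g := by
  have hfm : StrictMono (f ∘ Fin.rev) := fun a b hab => hf (Fin.rev_lt_rev.mpr hab)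
  have hgm : StrictMono (g ∘ Fin.rev) := fun a b hab => hg (Fin.rev_lt_rev.mpr hab)
  have hrange : Set.range (f ∘ Fin.rev) = Set.range (g ∘ Fin.rev) := by
    rw [Set.range_comp, Set.range_comp]
    rw [Fin.rev_surjective.range_eq, Set.image_univ, Set.image_univ]
    have h1 : Set.range f = Set.range (f ∘ π) := (π.surjective.range_comp f).symm
    have h2 : Set.range g = Set.range (g ∘ ρ) := (ρ.surjective.range_comp g).symm
    rw [h1, h2, h]
  haveI : WellFoundedLT (Fin n) := inferInstance
  have heq := (StrictMono.range_inj hfm hgm).mp hrange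
  funext r
  have := congrFun heq (Fin.rev r)
  simpa [Fin.rev_rev] using this

private noncomputable def groupEquiv (n : ℕ) :
    ({f : Fin n → ℕ // StrictAnti f} × Equiv.Perm (Fin n)) ≃
      {i : Fin n → ℕ // Function.Injective i} := by
  refine Equiv.ofBijective
    (fun p => ⟨p.1.1 ∘ p.2, p.1.2.injective.comp p.2.injective⟩) ⟨?_, ?_⟩
  · rintro ⟨⟨f, hf⟩, π⟩ ⟨⟨g, hg⟩, ρ⟩ h
    rw [Subtype.mk.injEq] at h
    have hfg : f = g := strictAnti_eq_of_comp_perm hf hg h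
    subst hfg
    have hπρ : π = ρ := Equiv.ext fun r => hf.injective (congrFun h r)
    simp [hπρ]
  · rintro ⟨i, hi⟩
    set σ := Tuple.sort i with hσ
    have hmono : Monotone (i ∘ σ) := Tuple.monotone_sort i
    have hsm : StrictMono (i ∘ σ) := hmono.strictMono_of_injective (hi.comp σ.injective)
    refine ⟨⟨⟨fun r => i (σ (Fin.rev r)), fun a b hab => hsm (Fin.rev_lt_rev.mpr hab)⟩,
      σ.symm.trans Fin.revPerm⟩, ?_⟩
    apply Subtype.ext
    funext r
    simp [Fin.rev_rev]

private lemma tsum_Fterm_eq (m n : ℕ) (hm : 0 < m) (x : Fin (2 * m) → Fin n → ℝ) :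
    ∑' i : Fin n → ℕ, Fterm m n x i
      = (n.factorial : ℝ) * ∑' a : {f : Fin n → ℕ // StrictAnti f}, Fterm m n x a.1 := by
  have hsum : Summable (Fterm m n x) := (Fterm_summable m n x).of_norm
  have hsupp : Function.support (Fterm m n x) ⊆ {i | Function.Injective i} := by
    intro i hFi
    by_contra h
    exact hFi (Fterm_eq_zero m n hm x i h)
  have hsub : Summable (fun i : {i : Fin n → ℕ // Function.Injective i} => Fterm m n x i.1) :=
    hsum.comp_injective Subtype.val_injective
  have hE : Summable ((fun i : {i : Fin n → ℕ // Function.Injective i} => Fterm m n x i.1)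
      ∘ (groupEquiv n)) := hsub.comp_injective (groupEquiv n).injective
  have c1 : ∑' i : Fin n → ℕ, Fterm m n x i
      = ∑' i : {i : Fin n → ℕ | Function.Injective i}, Fterm m n x i.1 :=
    (tsum_subtype_eq_of_support_subset hsupp).symm
  have c2 : ∑' i : {i : Fin n → ℕ | Function.Injective i}, Fterm m n x i.1
      = ∑' p : {f : Fin n → ℕ // StrictAnti f} × Equiv.Perm (Fin n),
          Fterm m n x ((groupEquiv n p).1) :=
    ((groupEquiv n).tsum_eq (fun i : {i : Fin n → ℕ // Function.Injective i} =>
      Fterm m n x i.1)).symm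
  have c3 : ∑' p : {f : Fin n → ℕ // StrictAnti f} × Equiv.Perm (Fin n),
        Fterm m n x ((groupEquiv n p).1)
      = ∑' (a : {f : Fin n → ℕ // StrictAnti f}) (π : Equiv.Perm (Fin n)),
          Fterm m n x (a.1 ∘ π) :=
    Summable.tsum_prod' (f := fun p : {f : Fin n → ℕ // StrictAnti f} × Equiv.Perm (Fin n) =>
      Fterm m n x ((groupEquiv n p).1)) hE fun a => Summable.of_finite
  have c4 : ∑' (a : {f : Fin n → ℕ // StrictAnti f}) (π : Equiv.Perm (Fin n)),
        Fterm m n x (a.1 ∘ π)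
      = ∑' a : {f : Fin n → ℕ // StrictAnti f}, (n.factorial : ℝ) * Fterm m n x a.1 := by
    refine tsum_congr fun a => ?_
    rw [tsum_fintype]
    rw [Finset.sum_congr rfl fun π _ => Fterm_comp_perm m n x a.1 π,
      Finset.sum_const, Finset.card_univ, Fintype.card_perm, Fintype.card_fin,
      nsmul_eq_mul]
  rw [c1, c2, c3, c4, tsum_mul_left]

end Aux

/-- The hyperdeterminant of the array `exp(x_{1,r₁} ⋯ x_{2m,r_{2m}})` expands as an absolutely
convergent sum over strictly decreasing tuples of nonnegative integers of products of
generalized Vandermonde determinants. -/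
theorem hyperDet_exp_eq_sum (m n : ℕ) (hm : 0 < m) (hn : 0 < n)
    (x : Fin (2 * m) → Fin n → ℝ) :
    Summable (fun i : {f : Fin n → ℕ // StrictAnti f} =>
      |(∏ j : Fin n, ((Nat.factorial (i.1 j) : ℝ)))⁻¹ *
        ∏ k : Fin (2 * m), Matrix.det (Matrix.of fun r s : Fin n => x k r ^ (i.1 s))|) ∧
    hyperDet m n (fun r => Real.exp (∏ k : Fin (2 * m), x k (r k))) =
      ∑' i : {f : Fin n → ℕ // StrictAnti f},
        (∏ j : Fin n, ((Nat.factorial (i.1 j) : ℝ)))⁻¹ *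
          ∏ k : Fin (2 * m), Matrix.det (Matrix.of fun r s : Fin n => x k r ^ (i.1 s)) := by
  constructor
  · have := ((Fterm_summable m n x).comp_injective
      (Subtype.val_injective : Function.Injective
        (Subtype.val : {f : Fin n → ℕ // StrictAnti f} → (Fin n → ℕ))))
    exact this.congr fun a => Real.norm_eq_abs _
  · rw [hyperDet]
    have hstep : ∀ σ : Fin (2 * m) → Equiv.Perm (Fin n),
        (∏ j : Fin n, Real.exp (∏ k : Fin (2 * m), x k (σ k j)))
          = ∑' i : Fin n → ℕ,
              ∏ j : Fin n, (∏ k : Fin (2 * m), x k (σ k j)) ^ (i j) / ((i j).factorial : ℝ) :=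
      fun σ => (prod_exp_eq_tsum fun j => ∏ k : Fin (2 * m), x k (σ k j)).2
    have hsummand : ∀ σ : Fin (2 * m) → Equiv.Perm (Fin n),
        Summable (fun i : Fin n → ℕ =>
          (∏ k : Fin (2 * m), ((Equiv.Perm.sign (σ k) : ℤ) : ℝ)) *
            ∏ j : Fin n, (∏ k : Fin (2 * m), x k (σ k j)) ^ (i j) / ((i j).factorial : ℝ)) :=
      fun σ => ((prod_exp_eq_tsum fun j => ∏ k : Fin (2 * m), x k (σ k j)).1.of_norm).mul_left _
    calc ((n.factorial : ℕ) : ℝ)⁻¹ *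
          ∑ σ : Fin (2 * m) → Equiv.Perm (Fin n),
            (∏ k : Fin (2 * m), ((Equiv.Perm.sign (σ k) : ℤ) : ℝ)) *
              ∏ j : Fin n, Real.exp (∏ k : Fin (2 * m), x k (σ k j))
        = ((n.factorial : ℕ) : ℝ)⁻¹ *
            ∑ σ : Fin (2 * m) → Equiv.Perm (Fin n),
              ∑' i : Fin n → ℕ,
                (∏ k : Fin (2 * m), ((Equiv.Perm.sign (σ k) : ℤ) : ℝ)) *
                  ∏ j : Fin n, (∏ k : Fin (2 * m), x k (σ k j)) ^ (i j)
                    / ((i j).factorial : ℝ) := by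
          congr 1
          refine Finset.sum_congr rfl fun σ _ => ?_
          rw [hstep σ, tsum_mul_left]
      _ = ((n.factorial : ℕ) : ℝ)⁻¹ * ∑' i : Fin n → ℕ, Fterm m n x i := by
          congr 1
          rw [← Summable.tsum_finsetSum fun σ _ => hsummand σ]
          exact tsum_congr fun i => sum_perm_eq_Fterm m n x i
      _ = ∑' i : {f : Fin n → ℕ // StrictAnti f},
            (∏ j : Fin n, ((Nat.factorial (i.1 j) : ℝ)))⁻¹ *
              ∏ k : Fin (2 * m), Matrix.det (Matrix.of fun r s : Fin n => x k r ^ (i.1 s)) := by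
          rw [tsum_Fterm_eq m n hm x, ← mul_assoc]
          rw [inv_mul_cancel₀ (by exact_mod_cast n.factorial_ne_zero), one_mul]
          rfl
end

section
/- Let m, n be positive integers and for k = 1,…,2m let x_k = (x_{k,1},…,x_{k,n}) ∈ ℝ^n have pairwise distinct coordinates. Define the array A(r_1,…,r_{2m}) = exp(x_{1,r_1} x_{2,r_2} ⋯ x_{2m,r_{2m}}). Then Det(A) = (∏_{k=1}^{2m} V(x_k)) · ∑_λ (∏_{j=1}^{n} 1/(λ_j + n − j)!) ∏_{k=1}^{2m} s_λ(x_k), where the sum runs over all partitions λ = (λ_1,…,λ_n) with λ_1 ≥ ⋯ ≥ λ_n ≥ 0. -/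
open scoped BigOperators

/-- The Vandermonde product `V(x) = ∏_{r < s} (x_r - x_s)`. -/
noncomputable def vandermonde (n : ℕ) (x : Fin n → ℝ) : ℝ :=
  ∏ r : Fin n, ∏ s ∈ Finset.Ioi r, (x r - x s)

/-- The Schur function `s_λ(x)` as a ratio of a generalized Vandermonde determinant and the
Vandermonde product; here `λ` is a partition written as an antitone function `Fin n → ℕ`
and the exponents are `λ_s + n - s` in one-based indexing. -/
noncomputable def schur (n : ℕ) (lam : Fin n → ℕ) (x : Fin n → ℝ) : ℝ :=
  Matrix.det (Matrix.of fun r s : Fin n => x r ^ (lam s + (n - 1 - (s : ℕ)))) /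
    vandermonde n x

/-! ### Auxiliary lemmas -/

open Finset

/-- A finite product of absolutely convergent series equals the sum over all tuples of indices. -/
private lemma aux_prodTsum {n : ℕ} (f : Fin n → ℕ → ℝ) (hf : ∀ j, Summable (f j)) :
    Summable (fun t : Fin n → ℕ => ∏ j, f j (t j)) ∧
      (∏ j, ∑' t : ℕ, f j t) = ∑' t : Fin n → ℕ, ∏ j, f j (t j) := by
  induction n with
  | zero =>
      refine ⟨Summable.of_finite, ?_⟩
      simp
  | succ n ih =>
      obtain ⟨hsum, heq⟩ := ih (fun j => f j.succ) (fun j => hf j.succ)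
      have h0 : Summable fun x : ℕ => ‖f 0 x‖ := summable_norm_iff.mpr (hf 0)
      have h1 : Summable fun g : Fin n → ℕ => ‖∏ j : Fin n, f j.succ (g j)‖ :=
        summable_norm_iff.mpr hsum
      have hmul : Summable (fun z : ℕ × (Fin n → ℕ) =>
          f 0 z.1 * ∏ j : Fin n, f j.succ (z.2 j)) :=
        summable_mul_of_summable_norm (f := f 0)
          (g := fun g : Fin n → ℕ => ∏ j : Fin n, f j.succ (g j)) h0 h1
      have key : ∀ z : ℕ × (Fin n → ℕ),
          f 0 z.1 * ∏ j : Fin n, f j.succ (z.2 j)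
            = ∏ j, f j ((Fin.consEquiv (fun _ => ℕ)) z j) := by
        intro z
        rw [Fin.prod_univ_succ]
        simp
      have hs : Summable (fun t : Fin n.succ → ℕ => ∏ j, f j (t j)) := by
        rw [← (Fin.consEquiv (fun _ => ℕ)).summable_iff]
        exact hmul.congr key
      refine ⟨hs, ?_⟩
      rw [Fin.prod_univ_succ, heq,
        tsum_mul_tsum_of_summable_norm h0 h1,
        ← (Fin.consEquiv (fun _ => ℕ)).tsum_eq]
      exact tsum_congr key

private lemma aux_strictAnti_step {n : ℕ} {g : Fin n → ℕ} (hg : StrictAnti g) :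
    ∀ a b : Fin n, a ≤ b → g b + ((b : ℕ) - (a : ℕ)) ≤ g a := by
  intro a b hab
  obtain ⟨d, hd⟩ : ∃ d, (b : ℕ) = (a : ℕ) + d := ⟨(b : ℕ) - (a : ℕ), by omega⟩
  clear hab
  induction d generalizing b with
  | zero =>
      have : a = b := Fin.ext (by omega)
      subst this; omega
  | succ d ihd =>
      have hb' : (a : ℕ) + d < n := by have := b.isLt; omega
      have h1 := ihd ⟨(a : ℕ) + d, hb'⟩ rfl
      have h2 : g b < g ⟨(a : ℕ) + d, hb'⟩ := hg (by rw [Fin.lt_def]; simp; omega)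
      have h3 : ((⟨(a : ℕ) + d, hb'⟩ : Fin n) : ℕ) = (a : ℕ) + d := rfl
      rw [h3] at h1
      omega

private lemma aux_strictAnti_ge {n : ℕ} {g : Fin n → ℕ} (hg : StrictAnti g) (j : Fin n) :
    n - 1 - (j : ℕ) ≤ g j := by
  have hn : 0 < n := j.pos
  have hlast : j ≤ (⟨n - 1, by omega⟩ : Fin n) := by
    rw [Fin.le_def]; simp; omega
  have h := aux_strictAnti_step hg j ⟨n - 1, by omega⟩ hlast
  have h3 : ((⟨n - 1, by omega⟩ : Fin n) : ℕ) = n - 1 := rfl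
  rw [h3] at h
  omega

/-- `μ_λ(j) = λ_j + (n-1-j)`. -/
private def muFun (n : ℕ) (lam : Fin n → ℕ) : Fin n → ℕ :=
  fun j => lam j + (n - 1 - (j : ℕ))

private lemma muFun_strictAnti {n : ℕ} {lam : Fin n → ℕ} (h : Antitone lam) :
    StrictAnti (muFun n lam) := by
  intro j j' hjj'
  have h1 : lam j' ≤ lam j := h hjj'.le
  have h2 : (j : ℕ) < (j' : ℕ) := hjj'
  have h3 : (j' : ℕ) < n := j'.isLt
  unfold muFun
  omega

/-- Forward map of the partition-permutation parametrization of injective tuples. -/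
private def phiFun (n : ℕ) (p : {f : Fin n → ℕ // Antitone f} × Equiv.Perm (Fin n)) :
    {t : Fin n → ℕ // Function.Injective t} :=
  ⟨fun j => muFun n p.1.1 (p.2 j),
    ((muFun_strictAnti p.1.2).injective).comp p.2.injective⟩

private lemma phiFun_bijective (n : ℕ) : Function.Bijective (phiFun n) := by
  constructor
  · rintro ⟨⟨l, hl⟩, τ⟩ ⟨⟨l', hl'⟩, τ'⟩ hp
    have hfun : (fun j => muFun n l (τ j)) = fun j => muFun n l' (τ' j) :=
      congrArg Subtype.val hp
    have hrange : Set.range (muFun n l) = Set.range (muFun n l') := by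
      have h1 : Set.range (fun j => muFun n l (τ j)) = Set.range (muFun n l) :=
        Function.Surjective.range_comp τ.surjective (muFun n l)
      have h2 : Set.range (fun j => muFun n l' (τ' j)) = Set.range (muFun n l') :=
        Function.Surjective.range_comp τ'.surjective (muFun n l')
      rw [← h1, ← h2, hfun]
    have hmu : muFun n l = muFun n l' :=
      ((muFun_strictAnti hl).range_inj (muFun_strictAnti hl')).mp hrange
    have hll : l = l' := by
      funext j
      have := congrFun hmu j
      unfold muFun at this
      omega
    have hττ : τ = τ' := by
      ext j
      have h4 : muFun n l (τ j) = muFun n l (τ' j) := by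
        rw [congrFun hfun j, hll]
      exact congrArg Fin.val ((muFun_strictAnti hl).injective h4)
    simp [hll, hττ]
  · rintro ⟨t, ht⟩
    set s := Tuple.sort t with hs
    have hmono : Monotone (t ∘ s) := Tuple.monotone_sort t
    have hsm : StrictMono (t ∘ s) :=
      hmono.strictMono_of_injective (ht.comp s.injective)
    set μ : Fin n → ℕ := fun j => t (s (Fin.rev j)) with hμ
    have hμanti : StrictAnti μ := by
      intro j j' hjj'
      exact hsm (by rw [Fin.rev_lt_rev]; exact hjj')
    have hge : ∀ j : Fin n, n - 1 - (j : ℕ) ≤ μ j := fun j => aux_strictAnti_ge hμanti j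
    refine ⟨⟨⟨fun j => μ j - (n - 1 - (j : ℕ)), ?_⟩,
      s⁻¹.trans (Equiv.ofBijective Fin.rev Fin.rev_bijective)⟩, ?_⟩
    · intro j j' hjj'
      have h1 := aux_strictAnti_step hμanti j j' hjj'
      have h2 : (j' : ℕ) < n := j'.isLt
      have h3 : (j : ℕ) ≤ (j' : ℕ) := hjj'
      simp only
      omega
    · apply Subtype.ext
      funext j
      show muFun n _ (Fin.rev (s⁻¹ j)) = t j
      unfold muFun
      simp only
      have hrev : Fin.rev (Fin.rev (s⁻¹ j)) = s⁻¹ j := Fin.rev_rev _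
      have hge' := hge (Fin.rev (s⁻¹ j))
      have : μ (Fin.rev (s⁻¹ j)) = t j := by
        rw [hμ]; simp only [hrev]
        show t (s (s⁻¹ j)) = t j
        simp
      omega

/-- The function appearing as the coefficient of each tuple of exponents. -/
private noncomputable def Dfun (m n : ℕ) (x : Fin (2 * m) → Fin n → ℝ)
    (t : Fin n → ℕ) : ℝ :=
  (∏ j : Fin n, (((t j).factorial : ℝ))⁻¹) *
    ∏ k : Fin (2 * m), Matrix.det (Matrix.of fun i j : Fin n => x k i ^ (t j))

private noncomputable def Gfun (m n : ℕ) (x : Fin (2 * m) → Fin n → ℝ)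
    (σ : Fin (2 * m) → Equiv.Perm (Fin n)) (t : Fin n → ℕ) : ℝ :=
  (∏ k : Fin (2 * m), ((Equiv.Perm.sign (σ k) : ℤ) : ℝ)) *
    ∏ j : Fin n, ((∏ k : Fin (2 * m), x k (σ k j)) ^ (t j) / ((t j).factorial : ℝ))

private lemma Gfun_summable (m n : ℕ) (x : Fin (2 * m) → Fin n → ℝ)
    (σ : Fin (2 * m) → Equiv.Perm (Fin n)) : Summable (Gfun m n x σ) :=
  ((aux_prodTsum (fun j s => (∏ k : Fin (2 * m), x k (σ k j)) ^ s / (s.factorial : ℝ))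
    (fun j => Real.summable_pow_div_factorial _)).1).mul_left _

private lemma Gfun_exp (m n : ℕ) (x : Fin (2 * m) → Fin n → ℝ)
    (σ : Fin (2 * m) → Equiv.Perm (Fin n)) :
    (∏ k : Fin (2 * m), ((Equiv.Perm.sign (σ k) : ℤ) : ℝ)) *
        ∏ j : Fin n, Real.exp (∏ k : Fin (2 * m), x k (σ k j))
      = ∑' t : Fin n → ℕ, Gfun m n x σ t := by
  have h := (aux_prodTsum (fun j s => (∏ k : Fin (2 * m), x k (σ k j)) ^ s / (s.factorial : ℝ))
    (fun j => Real.summable_pow_div_factorial _)).2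
  have hexp : (∏ j : Fin n, Real.exp (∏ k : Fin (2 * m), x k (σ k j)))
      = ∑' t : Fin n → ℕ, ∏ j : Fin n,
        ((∏ k : Fin (2 * m), x k (σ k j)) ^ (t j) / ((t j).factorial : ℝ)) := by
    rw [← h]
    refine Finset.prod_congr rfl fun j _ => ?_
    rw [Real.exp_eq_exp_ℝ, NormedSpace.exp_eq_tsum_div]
  rw [hexp, ← tsum_mul_left]
  rfl

private lemma sum_Gfun (m n : ℕ) (x : Fin (2 * m) → Fin n → ℝ) (t : Fin n → ℕ) :
    (∑ σ : Fin (2 * m) → Equiv.Perm (Fin n), Gfun m n x σ t) = Dfun m n x t := by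
  classical
  have step1 : ∀ σ : Fin (2 * m) → Equiv.Perm (Fin n),
      Gfun m n x σ t = (∏ j : Fin n, (((t j).factorial : ℝ))⁻¹) *
        ∏ k : Fin (2 * m), (((Equiv.Perm.sign (σ k) : ℤ) : ℝ) *
          ∏ j : Fin n, (x k ((σ k) j)) ^ (t j)) := by
    intro σ
    unfold Gfun
    rw [Finset.prod_mul_distrib]
    have h1 : ∏ j : Fin n, ((∏ k : Fin (2 * m), x k (σ k j)) ^ (t j) / ((t j).factorial : ℝ))
        = (∏ j : Fin n, (∏ k : Fin (2 * m), x k (σ k j)) ^ (t j)) *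
          ∏ j : Fin n, (((t j).factorial : ℝ))⁻¹ := by
      rw [← Finset.prod_mul_distrib]
      exact Finset.prod_congr rfl fun j _ => div_eq_mul_inv _ _
    have h2 : (∏ j : Fin n, (∏ k : Fin (2 * m), x k (σ k j)) ^ (t j))
        = ∏ k : Fin (2 * m), ∏ j : Fin n, (x k (σ k j)) ^ (t j) := by
      rw [Finset.prod_comm]
      exact Finset.prod_congr rfl fun j _ => by rw [← Finset.prod_pow]
    rw [h1, h2]
    ring
  rw [Finset.sum_congr rfl (fun σ _ => step1 σ), ← Finset.mul_sum]
  unfold Dfun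
  congr 1
  rw [← Fintype.prod_sum (fun k π => ((Equiv.Perm.sign π : ℤ) : ℝ) *
    ∏ j : Fin n, (x k (π j)) ^ (t j))]
  refine Finset.prod_congr rfl fun k _ => ?_
  rw [Matrix.det_apply']
  rfl

private lemma Dfun_eq_zero (m n : ℕ) (hm : 0 < m) (x : Fin (2 * m) → Fin n → ℝ)
    {t : Fin n → ℕ} (ht : ¬ Function.Injective t) : Dfun m n x t = 0 := by
  classical
  rw [Function.not_injective_iff] at ht
  obtain ⟨j, j', hjj', hne⟩ := ht
  unfold Dfun
  have k0 : Fin (2 * m) := ⟨0, by omega⟩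
  have : Matrix.det (Matrix.of fun i j'' : Fin n => x k0 i ^ (t j'')) = 0 := by
    refine Matrix.det_zero_of_column_eq hne (fun i => ?_)
    simp [hjj']
  rw [Finset.prod_eq_zero (Finset.mem_univ k0) this, mul_zero]

private lemma Dfun_phi (m n : ℕ) (x : Fin (2 * m) → Fin n → ℝ)
    (p : {f : Fin n → ℕ // Antitone f} × Equiv.Perm (Fin n)) :
    Dfun m n x ((phiFun n p).1) = Dfun m n x (muFun n p.1.1) := by
  classical
  obtain ⟨l, τ⟩ := p
  unfold Dfun phiFun
  simp only
  have h1 : (∏ j : Fin n, (((muFun n l.1 (τ j)).factorial : ℝ))⁻¹)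
      = ∏ j : Fin n, (((muFun n l.1 j).factorial : ℝ))⁻¹ :=
    Equiv.prod_comp τ (fun j => (((muFun n l.1 j).factorial : ℝ))⁻¹)
  have h2 : ∀ k : Fin (2 * m),
      Matrix.det (Matrix.of fun i j : Fin n => x k i ^ (muFun n l.1 (τ j)))
        = ((Equiv.Perm.sign τ : ℤ) : ℝ) *
          Matrix.det (Matrix.of fun i j : Fin n => x k i ^ (muFun n l.1 j)) := by
    intro k
    have : (Matrix.of fun i j : Fin n => x k i ^ (muFun n l.1 (τ j)))
        = (Matrix.of fun i j : Fin n => x k i ^ (muFun n l.1 j)).submatrix id τ := rfl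
    rw [this, Matrix.det_permute']
  rw [h1, Finset.prod_congr rfl (fun k _ => h2 k), Finset.prod_mul_distrib,
    Finset.prod_const, Finset.card_univ, Fintype.card_fin]
  have hsq : ((Equiv.Perm.sign τ : ℤ) : ℝ) ^ (2 * m) = 1 := by
    rw [pow_mul]
    rcases Int.units_eq_one_or (Equiv.Perm.sign τ) with h | h <;> rw [h] <;> norm_num
  rw [hsq, one_mul]

/-! ### Main theorem -/

set_option maxHeartbeats 2000000 in
/-- Schur function expansion of the hyperdeterminant of the array
`exp(x_{1,r₁} ⋯ x_{2m,r_{2m}})`. -/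
theorem hyperDet_exp_eq_schur_sum (m n : ℕ) (hm : 0 < m) (hn : 0 < n)
    (x : Fin (2 * m) → Fin n → ℝ) (hx : ∀ k, Function.Injective (x k)) :
    hyperDet m n (fun r => Real.exp (∏ k : Fin (2 * m), x k (r k))) =
      (∏ k : Fin (2 * m), vandermonde n (x k)) *
        ∑' lam : {f : Fin n → ℕ // Antitone f},
          (∏ j : Fin n, ((Nat.factorial (lam.1 j + (n - 1 - (j : ℕ))) : ℝ)))⁻¹ *
            ∏ k : Fin (2 * m), schur n lam.1 (x k) := by
  classical
  -- Vandermonde products are nonzero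
  have hV : ∀ k, vandermonde n (x k) ≠ 0 := by
    intro k
    unfold vandermonde
    rw [Finset.prod_ne_zero_iff]
    intro r _
    rw [Finset.prod_ne_zero_iff]
    intro s hs
    have hrs : r < s := Finset.mem_Ioi.mp hs
    exact sub_ne_zero.mpr (fun h => (ne_of_lt hrs) (hx k h))
  -- Step 1: expand the exponential into a sum over exponent tuples
  have hyp1 : hyperDet m n (fun r => Real.exp (∏ k : Fin (2 * m), x k (r k)))
      = ((n.factorial : ℕ) : ℝ)⁻¹ * ∑' t : Fin n → ℕ, Dfun m n x t := by
    unfold hyperDet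
    congr 1
    calc (∑ σ : Fin (2 * m) → Equiv.Perm (Fin n),
          (∏ k : Fin (2 * m), ((Equiv.Perm.sign (σ k) : ℤ) : ℝ)) *
            ∏ j : Fin n, Real.exp (∏ k : Fin (2 * m), x k (σ k j)))
        = ∑ σ : Fin (2 * m) → Equiv.Perm (Fin n), ∑' t : Fin n → ℕ, Gfun m n x σ t :=
          Finset.sum_congr rfl fun σ _ => Gfun_exp m n x σ
      _ = ∑' t : Fin n → ℕ, ∑ σ : Fin (2 * m) → Equiv.Perm (Fin n), Gfun m n x σ t :=
          (Summable.tsum_finsetSum (fun σ _ => Gfun_summable m n x σ)).symm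
      _ = ∑' t : Fin n → ℕ, Dfun m n x t := tsum_congr fun t => sum_Gfun m n x t
  have hDsummable : Summable (Dfun m n x) :=
    (summable_sum (fun σ (_ : σ ∈ Finset.univ) => Gfun_summable m n x σ)).congr
      (fun t => sum_Gfun m n x t)
  -- Step 2: restrict to injective tuples
  have hsupp : Function.support (Dfun m n x) ⊆ {t : Fin n → ℕ | Function.Injective t} := by
    intro t ht
    by_contra hinj
    exact ht (Dfun_eq_zero m n hm x hinj)
  have e1 : (∑' t : {t : Fin n → ℕ // Function.Injective t}, Dfun m n x t.1)
      = ∑' t : Fin n → ℕ, Dfun m n x t :=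
    tsum_subtype_eq_of_support_subset hsupp
  -- Step 3: reparametrize by partitions and permutations
  let E : ({f : Fin n → ℕ // Antitone f} × Equiv.Perm (Fin n))
      ≃ {t : Fin n → ℕ // Function.Injective t} :=
    Equiv.ofBijective (phiFun n) (phiFun_bijective n)
  have e2 : (∑' p : {f : Fin n → ℕ // Antitone f} × Equiv.Perm (Fin n),
        Dfun m n x ((phiFun n p).1))
      = ∑' t : {t : Fin n → ℕ // Function.Injective t}, Dfun m n x t.1 :=
    E.tsum_eq (fun t => Dfun m n x t.1)
  have hsubsummable : Summable (fun t : {t : Fin n → ℕ // Function.Injective t} =>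
      Dfun m n x t.1) := hDsummable.subtype {t : Fin n → ℕ | Function.Injective t}
  have hpsummable : Summable (fun p : {f : Fin n → ℕ // Antitone f} × Equiv.Perm (Fin n) =>
      Dfun m n x ((phiFun n p).1)) := E.summable_iff.mpr hsubsummable
  have hpsummable' : Summable (fun p : {f : Fin n → ℕ // Antitone f} × Equiv.Perm (Fin n) =>
      Dfun m n x (muFun n p.1.1)) := hpsummable.congr (fun p => Dfun_phi m n x p)
  have e3 : (∑' p : {f : Fin n → ℕ // Antitone f} × Equiv.Perm (Fin n),
        Dfun m n x ((phiFun n p).1))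
      = ((n.factorial : ℕ) : ℝ) * ∑' l : {f : Fin n → ℕ // Antitone f},
          Dfun m n x (muFun n l.1) := by
    rw [tsum_congr (fun p => Dfun_phi m n x p),
      Summable.tsum_prod' hpsummable' (fun l => Summable.of_finite)]
    rw [← tsum_mul_left]
    refine tsum_congr fun l => ?_
    rw [tsum_fintype]
    have hconst : (∑ _b : Equiv.Perm (Fin n), Dfun m n x (muFun n l.1))
        = ((n.factorial : ℕ) : ℝ) * Dfun m n x (muFun n l.1) := by
      rw [Finset.sum_const, Finset.card_univ, Fintype.card_perm,
        Fintype.card_fin, nsmul_eq_mul]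
    exact hconst
  -- Assemble
  rw [hyp1, ← e1, ← e2, e3, ← mul_assoc]
  have hfac : (((n.factorial : ℕ) : ℝ))⁻¹ * ((n.factorial : ℕ) : ℝ) = 1 :=
    inv_mul_cancel₀ (by exact_mod_cast n.factorial_ne_zero)
  rw [hfac, one_mul]
  -- Step 4: pointwise identification with Schur functions
  rw [← tsum_mul_left]
  refine tsum_congr fun l => ?_
  unfold Dfun
  have hdet : ∀ k : Fin (2 * m),
      Matrix.det (Matrix.of fun i j : Fin n => x k i ^ (muFun n l.1 j))
        = schur n l.1 (x k) * vandermonde n (x k) := by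
    intro k
    unfold schur muFun
    rw [div_mul_cancel₀ _ (hV k)]
  rw [Finset.prod_congr rfl (fun k _ => hdet k), Finset.prod_mul_distrib,
    Finset.prod_inv_distrib]
  show (∏ j : Fin n, (((muFun n l.1 j).factorial : ℝ)))⁻¹ *
      ((∏ k : Fin (2 * m), schur n l.1 (x k)) * ∏ k : Fin (2 * m), vandermonde n (x k))
    = (∏ k : Fin (2 * m), vandermonde n (x k)) *
      ((∏ j : Fin n, ((Nat.factorial (l.1 j + (n - 1 - (j : ℕ))) : ℝ)))⁻¹ *
        ∏ k : Fin (2 * m), schur n l.1 (x k))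
  unfold muFun
  ring
end

section
/- (Hyperdeterminantal total positivity of the generalized hypergeometric kernel.) Let p, q be nonnegative integers with either p ≤ q, or p = q + 1. Let a_1,…,a_p ≥ 0 and b_1,…,b_q > 0 be real numbers, and define F(z) = ∑_{i=0}^{∞} ( (a_1)_i ⋯ (a_p)_i / ((b_1)_i ⋯ (b_q)_i) ) z^i / i!. Let m, n be positive integers and for k = 1,…,2m let x_k = (x_{k,1},…,x_{k,n}) ∈ ℝ^n satisfy x_{k,1} > ⋯ > x_{k,n} ≥ 0; if p = q + 1 assume additionally x_{1,1} x_{2,1} ⋯ x_{2m,1} < 1. Then the hyperdeterminant Det( F(x_{1,r_1} x_{2,r_2} ⋯ x_{2m,r_{2m}}) )_{1≤r_1,…,r_{2m}≤n} is nonnegative. -/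
open scoped BigOperators

/-- The classical rising factorial `(a)_i = a(a+1)⋯(a+i-1)`. -/
noncomputable def risingFactorial (a : ℝ) (i : ℕ) : ℝ :=
  ∏ t ∈ Finset.range i, (a + t)

/-- The classical generalized hypergeometric series
`pFq(a₁,…,a_p; b₁,…,b_q; z) = ∑_{i≥0} ((a₁)_i ⋯ (a_p)_i / ((b₁)_i ⋯ (b_q)_i)) z^i / i!`. -/
noncomputable def pFq (p q : ℕ) (a : Fin p → ℝ) (b : Fin q → ℝ) (z : ℝ) : ℝ :=
  ∑' i : ℕ, ((∏ s : Fin p, risingFactorial (a s) i) / (∏ t : Fin q, risingFactorial (b t) i)) *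
    z ^ i / (Nat.factorial i : ℝ)

/-!
Writing each entry `F(∏ₖ x_{k,rₖ})` as a power series with nonnegative coefficients `cᵢ`,
multilinearity turns the hyperdeterminant of a partial sum into a nonnegative combination
`∑_μ (∏ⱼ c_{μⱼ}) ∏ₖ det (x_{k,r}^{μⱼ})_{r,j}` of products of `2m` generalized Vandermonde
determinants sharing the exponent vector `μ`. For distinct exponents such a determinant never
vanishes on the convex cone of strictly decreasing positive vectors, since a nonzero polynomial
has fewer positive roots than terms (Descartes' rule of signs); hence it has constant sign there
and, by continuity, weakly the same sign on the closure of the cone. A product of an even number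
of factors of one sign is nonnegative. Finally the ratio test gives convergence of the series
under the hypotheses on `p, q` and `x`, and the hyperdeterminant is continuous in the array.
-/

open Finset Matrix Polynomial Filter Topology

namespace Polynomial

theorem signVariations_lt_card_support {R : Type*} [Semiring R] [LinearOrder R] {P : R[X]}
    (hP : P ≠ 0) : P.signVariations < #P.support := by
  induction h : #P.support using Nat.strong_induction_on generalizing P with
  | _ c ih =>
    by_cases hE : P.eraseLead = 0
    · rw [← eraseLead_add_monomial_natDegree_leadingCoeff P, hE, zero_add,
        signVariations_monomial, ← h]
      exact card_pos.2 (support_nonempty.2 hP)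
    · have hc := card_support_eraseLead_add_one hP
      have := ih _ (by omega) hE rfl
      have := P.signVariations_le_eraseLead_succ
      omega

theorem card_lt_card_support_of_forall_pos_isRoot {R : Type*} [CommRing R] [LinearOrder R]
    [IsStrictOrderedRing R] {P : R[X]} (hP : P ≠ 0) {s : Finset R}
    (hs : ∀ x ∈ s, 0 < x ∧ P.IsRoot x) : #s < #P.support := by
  have hle : s.val ≤ P.roots.filter (0 < ·) :=
    (Multiset.le_iff_subset s.nodup).2 fun x hx =>
      Multiset.mem_filter.2 ⟨(mem_roots hP).2 (hs x hx).2, (hs x hx).1⟩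
  calc #s ≤ P.roots.countP (0 < ·) := by
        rw [Multiset.countP_eq_card_filter]; exact Multiset.card_le_card hle
    _ ≤ P.signVariations := P.roots_countP_pos_le_signVariations
    _ < #P.support := signVariations_lt_card_support hP

end Polynomial

namespace Matrix

def genVandermonde {R ι : Type*} [CommRing R] (x : ι → R) (μ : ι → ℕ) : Matrix ι ι R :=
  of fun r j => x r ^ μ j

variable {ι : Type*} [Fintype ι] [DecidableEq ι]

theorem det_genVandermonde_ne_zero {R : Type*} [CommRing R] [LinearOrder R]
    [IsStrictOrderedRing R] {x : ι → R} (hx : Function.Injective x) (hpos : ∀ r, 0 < x r)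
    {μ : ι → ℕ} (hμ : Function.Injective μ) : (genVandermonde x μ).det ≠ 0 := by
  intro hdet
  obtain ⟨v, hv0, hv⟩ := exists_mulVec_eq_zero_iff.2 hdet
  set P : R[X] := ∑ j, monomial (μ j) (v j)
  have hcoeff : ∀ j, P.coeff (μ j) = v j := fun j => by
    simp only [P, finsetSum_coeff, coeff_monomial, hμ.eq_iff, sum_ite_eq', mem_univ, if_true]
  have hP : P ≠ 0 := fun h =>
    hv0 (funext fun j => by rw [← hcoeff j, h, coeff_zero, Pi.zero_apply])
  have hroots : ∀ y ∈ univ.image x, 0 < y ∧ P.IsRoot y := by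
    simp only [mem_image, mem_univ, true_and, forall_exists_index, forall_apply_eq_imp_iff]
    refine fun r => ⟨hpos r, ?_⟩
    simpa [P, IsRoot, eval_finsetSum, mulVec, dotProduct, genVandermonde, mul_comm] using
      congrFun hv r
  have hsupp : P.support ⊆ univ.image μ := fun k hk => by
    by_contra hk'
    simp only [mem_image, mem_univ, true_and, not_exists] at hk'
    exact mem_support_iff.1 hk (by simp [P, finsetSum_coeff, coeff_monomial, hk'])
  have := card_lt_card_support_of_forall_pos_isRoot hP hroots
  rw [card_image_of_injective _ hx] at this
  exact (this.trans_le ((card_le_card hsupp).trans card_image_le)).false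

theorem continuous_det_genVandermonde (μ : ι → ℕ) :
    Continuous fun x : ι → ℝ => (genVandermonde x μ).det :=
  (continuous_matrix fun r j => (continuous_apply r).pow (μ j)).matrix_det

end Matrix

theorem convex_setOf_strictAnti_pos {ι : Type*} [Preorder ι] :
    Convex ℝ {x : ι → ℝ | StrictAnti x ∧ ∀ r, 0 < x r} := by
  rintro x ⟨hx, hx0⟩ y ⟨hy, hy0⟩ a b ha hb hab
  refine ⟨fun r r' h => ?_, fun r => ?_⟩
  · rcases ha.eq_or_lt with rfl | ha
    · simpa [show b = 1 by linarith] using hy h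
    · have := mul_lt_mul_of_pos_left (hx h) ha
      have := mul_le_mul_of_nonneg_left (hy h).le hb
      simp only [Pi.add_apply, Pi.smul_apply, smul_eq_mul]
      linarith
  · rcases ha.eq_or_lt with rfl | ha
    · simpa [show b = 1 by linarith] using hy0 r
    · have := mul_pos ha (hx0 r)
      have := mul_nonneg hb (hy0 r).le
      simp only [Pi.add_apply, Pi.smul_apply, smul_eq_mul]
      linarith

theorem prod_nonneg_of_even_card {ι : Type*} {s : Finset ι} (hs : Even #s) {f : ι → ℝ} {c : ℝ}
    (hc : c ≠ 0) (h : ∀ i ∈ s, 0 ≤ c * f i) : 0 ≤ ∏ i ∈ s, f i := by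
  have := prod_nonneg h
  rw [prod_mul_distrib, prod_const] at this
  exact nonneg_of_mul_nonneg_right this (hs.pow_pos hc)

section SignOfGenVandermonde

variable {n : ℕ} {μ : Fin n → ℕ}

theorem det_genVandermonde_mul_pos (hμ : Function.Injective μ) {x y : Fin n → ℝ}
    (hx : StrictAnti x) (hx0 : ∀ r, 0 < x r) (hy : StrictAnti y) (hy0 : ∀ r, 0 < y r) :
    0 < (genVandermonde x μ).det * (genVandermonde y μ).det := by
  set S := {x : Fin n → ℝ | StrictAnti x ∧ ∀ r, 0 < x r}
  have no_sign_change : ∀ u ∈ S, ∀ v ∈ S,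
      (genVandermonde u μ).det ≤ 0 → 0 ≤ (genVandermonde v μ).det → False := by
    intro u hu v hv hu0 hv0
    obtain ⟨w, hw, hw0⟩ := convex_setOf_strictAnti_pos.isPreconnected.intermediate_value hu hv
      (continuous_det_genVandermonde μ).continuousOn ⟨hu0, hv0⟩
    exact det_genVandermonde_ne_zero hw.1.injective hw.2 hμ hw0
  by_contra h
  rcases mul_nonpos_iff.1 (not_lt.1 h) with ⟨h1, h2⟩ | ⟨h1, h2⟩
  · exact no_sign_change y ⟨hy, hy0⟩ x ⟨hx, hx0⟩ h2 h1
  · exact no_sign_change x ⟨hx, hx0⟩ y ⟨hy, hy0⟩ h1 h2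

theorem det_genVandermonde_mul_nonneg (hμ : Function.Injective μ) {x y : Fin n → ℝ}
    (hx : StrictAnti x) (hx0 : ∀ r, 0 < x r) (hy : StrictAnti y) (hy0 : ∀ r, 0 ≤ y r) :
    0 ≤ (genVandermonde x μ).det * (genVandermonde y μ).det := by
  have hcont : Continuous fun δ : ℝ =>
      (genVandermonde x μ).det * (genVandermonde (fun r => y r + δ) μ).det :=
    continuous_const.mul ((continuous_det_genVandermonde μ).comp (by fun_prop))
  have hlim := hcont.continuousWithinAt.tendsto (s := Set.Ioi 0) (x := 0)
  simp only [add_zero] at hlim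
  refine ge_of_tendsto hlim (eventually_nhdsWithin_of_forall fun δ (hδ : 0 < δ) => ?_)
  refine (det_genVandermonde_mul_pos hμ hx hx0 (fun r r' h => ?_) fun r => ?_).le
  · simpa using hy h
  · simpa using add_pos_of_nonneg_of_pos (hy0 r) hδ

theorem prod_det_genVandermonde_nonneg {m : ℕ} {x : Fin (2 * m) → Fin n → ℝ}
    (hx : ∀ k, StrictAnti (x k)) (hx0 : ∀ k r, 0 ≤ x k r) (μ : Fin n → ℕ) :
    0 ≤ ∏ k, (genVandermonde (x k) μ).det := by
  by_cases hμ : Function.Injective μ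
  · set x₀ : Fin n → ℝ := fun r => (r.rev : ℝ) + 1
    have hx₀ : StrictAnti x₀ := fun r r' h => by simpa [x₀] using Fin.rev_strictAnti h
    exact prod_nonneg_of_even_card (by simp)
      (det_genVandermonde_ne_zero hx₀.injective (fun r => by positivity) hμ) fun k _ =>
      det_genVandermonde_mul_nonneg hμ hx₀ (fun r => by positivity) (hx k) (hx0 k)
  · obtain ⟨j, j', hjj', hne⟩ : ∃ j j', μ j = μ j' ∧ j ≠ j' := by
      simpa [Function.Injective] using hμ
    refine prod_nonneg fun k _ => (det_zero_of_column_eq hne fun r => ?_).ge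
    simp [genVandermonde, hjj']

end SignOfGenVandermonde

section HyperDet

variable {m n : ℕ}

theorem continuous_hyperDet : Continuous (hyperDet m n) := by
  unfold hyperDet
  fun_prop

theorem hyperDet_sum_mul_prod {ι : Type*} (s : Finset ι) (d : ι → ℝ)
    (φ : Fin (2 * m) → Fin n → ι → ℝ) :
    hyperDet m n (fun r => ∑ i ∈ s, d i * ∏ k, φ k (r k) i) =
      (n.factorial : ℝ)⁻¹ * ∑ y ∈ Fintype.piFinset fun _ => s,
        (∏ j, d (y j)) * ∏ k, (of fun r j => φ k r (y j)).det := by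
  unfold hyperDet
  congr 1
  simp_rw [prod_univ_sum, mul_sum]
  rw [sum_comm]
  refine sum_congr rfl fun y _ => ?_
  simp_rw [det_apply', of_apply, Fintype.prod_sum, mul_sum]
  refine sum_congr rfl fun σ _ => ?_
  rw [prod_mul_distrib, prod_mul_distrib, prod_comm (s := univ (α := Fin n))]
  ring

variable {x : Fin (2 * m) → Fin n → ℝ} (hx : ∀ k, StrictAnti (x k)) (hx0 : ∀ k r, 0 ≤ x k r)
  {d : ℕ → ℝ} (hd : ∀ i, 0 ≤ d i)
include hx hx0 hd

theorem hyperDet_sum_pow_nonneg (s : Finset ℕ) :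
    0 ≤ hyperDet m n fun r => ∑ i ∈ s, d i * ∏ k, x k (r k) ^ i := by
  rw [hyperDet_sum_mul_prod s d fun k r i => x k r ^ i]
  exact mul_nonneg (by positivity) (sum_nonneg fun y _ => mul_nonneg
    (prod_nonneg fun j _ => hd (y j)) (prod_det_genVandermonde_nonneg hx hx0 y))

theorem hyperDet_tsum_pow_nonneg (hsum : ∀ r : Fin (2 * m) → Fin n, Summable fun i => d i * (∏ k, x k (r k)) ^ i) :
    0 ≤ hyperDet m n fun r => ∑' i, d i * (∏ k, x k (r k)) ^ i := by
  have hlim := (continuous_hyperDet.tendsto _).comp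
    (tendsto_pi_nhds.2 fun r => (hsum r).hasSum.tendsto_sum_nat)
  refine ge_of_tendsto' hlim fun N => ?_
  simpa only [Function.comp_apply, prod_pow] using hyperDet_sum_pow_nonneg hx hx0 hd (range N)

end HyperDet

theorem risingFactorial_succ (a : ℝ) (i : ℕ) :
    risingFactorial a (i + 1) = risingFactorial a i * (a + i) :=
  prod_range_succ _ _

theorem risingFactorial_nonneg {a : ℝ} (ha : 0 ≤ a) (i : ℕ) : 0 ≤ risingFactorial a i :=
  prod_nonneg fun _ _ => by positivity

section Hypergeometric

variable {p q : ℕ} (a : Fin p → ℝ) (b : Fin q → ℝ)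

noncomputable def pFqCoeff (i : ℕ) : ℝ :=
  (∏ s, risingFactorial (a s) i) / (∏ t, risingFactorial (b t) i) / i.factorial

noncomputable def pFqRatio (i : ℕ) : ℝ :=
  (∏ s, (a s + i)) / ((∏ t, (b t + i)) * (i + 1))

theorem pFq_eq_tsum (z : ℝ) : pFq p q a b z = ∑' i, pFqCoeff a b i * z ^ i := by
  unfold pFq pFqCoeff
  congr 1 with i
  ring

variable {a b} in
theorem pFqCoeff_nonneg (ha : ∀ s, 0 ≤ a s) (hb : ∀ t, 0 ≤ b t) (i : ℕ) :
    0 ≤ pFqCoeff a b i :=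
  div_nonneg (div_nonneg (prod_nonneg fun s _ => risingFactorial_nonneg (ha s) i)
    (prod_nonneg fun t _ => risingFactorial_nonneg (hb t) i)) (Nat.cast_nonneg _)

theorem pFqCoeff_succ (i : ℕ) : pFqCoeff a b (i + 1) = pFqCoeff a b i * pFqRatio a b i := by
  simp only [pFqCoeff, pFqRatio, risingFactorial_succ, prod_mul_distrib, Nat.factorial_succ,
    Nat.cast_mul, Nat.cast_succ, div_eq_mul_inv, mul_inv]
  ring

theorem pFqRatio_eq (i : ℕ) : pFqRatio a b i =
    (∏ s, (a s + i) / (i + 1)) / (∏ t, (b t + i) / (i + 1)) * ((i : ℝ) + 1) ^ ((p : ℤ) - q - 1) := by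
  have hi : (i : ℝ) + 1 ≠ 0 := by positivity
  simp only [pFqRatio, prod_div_distrib, prod_const, card_univ, Fintype.card_fin,
    zpow_sub₀ hi, zpow_natCast, zpow_one]
  field_simp

theorem tendsto_prod_add_div_add_one {ι : Type*} [Fintype ι] (c : ι → ℝ) :
    Tendsto (fun i : ℕ => ∏ s, (c s + i) / (i + 1)) atTop (𝓝 1) := by
  have h : ∀ s, Tendsto (fun i : ℕ => (c s + i) / (i + 1)) atTop (𝓝 1) := fun s => by
    simpa [add_comm] using tendsto_add_mul_div_add_mul_atTop_nhds (c s) 1 1 one_ne_zero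
  simpa only [prod_const_one] using tendsto_finsetProd univ fun s _ => h s

theorem tendsto_pFqRatio_of_le (h : p ≤ q) : Tendsto (pFqRatio a b) atTop (𝓝 0) := by
  have hpow : Tendsto (fun i : ℕ => ((i : ℝ) + 1) ^ ((p : ℤ) - q - 1)) atTop (𝓝 0) :=
    (tendsto_zpow_atTop_zero (by omega)).comp
      (tendsto_atTop_add_const_right _ 1 tendsto_natCast_atTop_atTop)
  have h := ((tendsto_prod_add_div_add_one a).div (tendsto_prod_add_div_add_one b)
    one_ne_zero).mul hpow
  rw [mul_zero] at h
  exact h.congr fun i => (pFqRatio_eq a b i).symm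

theorem tendsto_pFqRatio_of_eq (h : p = q + 1) : Tendsto (pFqRatio a b) atTop (𝓝 1) := by
  have h0 : (p : ℤ) - q - 1 = 0 := by omega
  have h := (tendsto_prod_add_div_add_one a).div (tendsto_prod_add_div_add_one b) one_ne_zero
  rw [div_one] at h
  refine h.congr fun i => ?_
  rw [pFqRatio_eq, h0, zpow_zero, mul_one]
  rfl

theorem summable_pFqCoeff_mul_pow (hpq : p ≤ q ∨ p = q + 1) {z : ℝ}
    (hz : p = q + 1 → |z| < 1) : Summable fun i => pFqCoeff a b i * z ^ i := by
  obtain ⟨L, hL, hzL⟩ : ∃ L, Tendsto (pFqRatio a b) atTop (𝓝 L) ∧ |z| * |L| < 1 := by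
    rcases hpq with h | h
    · exact ⟨0, tendsto_pFqRatio_of_le a b h, by simp⟩
    · exact ⟨1, tendsto_pFqRatio_of_eq a b h, by simpa using hz h⟩
  obtain ⟨r, hLr, hr⟩ := exists_between hzL
  have hev : ∀ᶠ i in atTop, |z| * |pFqRatio a b i| < r :=
    (hL.abs.const_mul |z|).eventually (gt_mem_nhds hLr)
  refine summable_of_ratio_norm_eventually_le hr ?_
  filter_upwards [hev] with i hi
  calc ‖pFqCoeff a b (i + 1) * z ^ (i + 1)‖
      = |z| * |pFqRatio a b i| * ‖pFqCoeff a b i * z ^ i‖ := by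
        simp only [pFqCoeff_succ, pow_succ, Real.norm_eq_abs, abs_mul]; ring
    _ ≤ r * ‖pFqCoeff a b i * z ^ i‖ := mul_le_mul_of_nonneg_right hi.le (norm_nonneg _)

end Hypergeometric

/-- Hyperdeterminantal total positivity of the generalized hypergeometric kernel. -/
theorem hyperDet_pFq_nonneg (p q : ℕ) (hpq : p ≤ q ∨ p = q + 1)
    (a : Fin p → ℝ) (b : Fin q → ℝ) (ha : ∀ s, 0 ≤ a s) (hb : ∀ t, 0 < b t)
    (m n : ℕ) (hn : 0 < n)
    (x : Fin (2 * m) → Fin n → ℝ) (hanti : ∀ k, StrictAnti (x k))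
    (hnonneg : ∀ k, 0 ≤ x k ⟨n - 1, by omega⟩)
    (hlt : p = q + 1 → (∏ k : Fin (2 * m), x k ⟨0, by omega⟩) < 1) :
    0 ≤ hyperDet m n (fun r => pFq p q a b (∏ k : Fin (2 * m), x k (r k))) := by
  have hx0 : ∀ k r, 0 ≤ x k r := fun k r =>
    (hnonneg k).trans ((hanti k).antitone (Fin.le_def.2 (Nat.le_sub_one_of_lt r.isLt)))
  have hz : ∀ r : Fin (2 * m) → Fin n, p = q + 1 → |∏ k, x k (r k)| < 1 := fun r h => by
    rw [abs_of_nonneg (prod_nonneg fun k _ => hx0 k (r k))]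
    refine lt_of_le_of_lt (prod_le_prod (fun k _ => hx0 k (r k)) fun k _ => ?_) (hlt h)
    exact (hanti k).antitone (Fin.le_def.2 (Nat.zero_le _))
  simp only [pFq_eq_tsum]
  exact hyperDet_tsum_pow_nonneg hanti hx0 (pFqCoeff_nonneg ha fun t => (hb t).le)
    fun r => summable_pFqCoeff_mul_pow a b hpq (hz r)
end

section
/- Let p, q be nonnegative integers with either p ≤ q, or p = q + 1. Let a_1,…,a_p be real numbers and let b_1,…,b_q be real numbers none of which is a nonpositive integer, and define F(z) = ∑_{i=0}^{∞} ( (a_1)_i ⋯ (a_p)_i / ((b_1)_i ⋯ (b_q)_i) ) z^i / i!. Let m, n be positive integers and for k = 1,…,2m let x_k = (x_{k,1},…,x_{k,n}) ∈ ℝ^n; if p = q + 1 assume additionally |x_{1,r_1} x_{2,r_2} ⋯ x_{2m,r_{2m}}| < 1 for all indices. Then Det( F(x_{1,r_1} x_{2,r_2} ⋯ x_{2m,r_{2m}}) )_{1≤r_1,…,r_{2m}≤n} = ∑_{i_1 > ⋯ > i_n ≥ 0} ∏_{j=1}^{n} ( (a_1)_{i_j} ⋯ (a_p)_{i_j} /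 ((b_1)_{i_j} ⋯ (b_q)_{i_j}) ) (1/ i_j!) · ∏_{k=1}^{2m} det( (x_{k,r})^{i_s} )_{1≤r,s≤n}, the sum running over all strictly decreasing n-tuples of nonnegative integers. -/
open scoped BigOperators

/-!
Expand every entry as a power series `F(z) = ∑ cᵢ zⁱ`, which converges absolutely by the ratio
test. Multiplying out the `n` factors of each term of the hyperdeterminant gives a sum over tuples
`f : Fin n → ℕ`, and for fixed `f` the sum over `σ₁, …, σ₂ₘ` splits into `∏ⱼ c_{f j}` times the
product of the `2m` determinants `det (x_{k,r} ^ f s)`. These vanish unless `f` is injective, and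
replacing `f` by `f ∘ π` multiplies each of them by `sign π`, which cancels because there is an even
number of them. Writing an injective `f` uniquely as a strictly decreasing tuple composed with a
permutation therefore collects `n!` equal terms, cancelling the factor `1 / n!`.
-/

open Filter Topology Function Equiv

theorem summable_of_eq_mul_of_tendsto_norm_lt_one {R : Type*} [SeminormedRing R] [CompleteSpace R]
    {f ρ : ℕ → R} {l : ℝ} (hl : l < 1) (hf : ∀ i, f (i + 1) = f i * ρ i)
    (hρ : Tendsto (fun i => ‖ρ i‖) atTop (𝓝 l)) : Summable f := by
  obtain ⟨r, hlr, hr⟩ := exists_between hl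
  refine summable_of_ratio_norm_eventually_le hr ?_
  filter_upwards [hρ.eventually_le_const hlr] with i hi
  calc ‖f (i + 1)‖ ≤ ‖f i‖ * ‖ρ i‖ := hf i ▸ norm_mul_le _ _
    _ ≤ r * ‖f i‖ := by rw [mul_comm]; gcongr

noncomputable def hgCoeff (p q : ℕ) (a : Fin p → ℝ) (b : Fin q → ℝ) (i : ℕ) : ℝ :=
  ((∏ s : Fin p, risingFactorial (a s) i) / (∏ t : Fin q, risingFactorial (b t) i)) *
    ((Nat.factorial i : ℝ))⁻¹

noncomputable def hgRatio (p q : ℕ) (a : Fin p → ℝ) (b : Fin q → ℝ) (i : ℕ) : ℝ :=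
  (∏ s : Fin p, (a s + i)) / ((∏ t : Fin q, (b t + i)) * (i + 1))

section Hypergeometric

variable {p q : ℕ} (a : Fin p → ℝ) (b : Fin q → ℝ)

theorem pFq_eq_tsum_hgCoeff_mul_pow (z : ℝ) :
    pFq p q a b z = ∑' i, hgCoeff p q a b i * z ^ i :=
  tsum_congr fun i => by rw [hgCoeff, div_eq_mul_inv, mul_right_comm]

theorem hgCoeff_succ (i : ℕ) :
    hgCoeff p q a b (i + 1) = hgCoeff p q a b i * hgRatio p q a b i := by
  simp only [hgCoeff, hgRatio, risingFactorial, Finset.prod_range_succ, Finset.prod_mul_distrib,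
    Nat.factorial_succ, Nat.cast_mul, Nat.cast_succ, div_eq_mul_inv, mul_inv]
  ring

theorem tendsto_add_div_add_one (w : ℝ) :
    Tendsto (fun i : ℕ => (w + i) / (i + 1)) atTop (𝓝 1) := by
  have h := (tendsto_natCast_div_add_atTop (1 : ℝ)).add
    ((tendsto_one_div_add_atTop_nhds_zero_nat (𝕜 := ℝ)).const_mul w)
  rw [mul_zero, add_zero] at h
  refine h.congr fun i => ?_
  field_simp
  ring

theorem hgRatio_mul_pow (hpq : p ≤ q + 1) (i : ℕ) :
    hgRatio p q a b i * ((i : ℝ) + 1) ^ (q + 1 - p) =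
      (∏ s, (a s + i) / ((i : ℝ) + 1)) / ∏ t, (b t + i) / ((i : ℝ) + 1) := by
  obtain ⟨d, hd⟩ : ∃ d, q + 1 = p + d := ⟨q + 1 - p, by omega⟩
  have hN : (i : ℝ) + 1 ≠ 0 := by positivity
  rw [Finset.prod_div_distrib, Finset.prod_div_distrib, Finset.prod_const, Finset.prod_const,
    Finset.card_univ, Finset.card_univ, Fintype.card_fin, Fintype.card_fin, hgRatio,
    show q + 1 - p = d by omega]
  have hq : ((i : ℝ) + 1) ^ q * ((i : ℝ) + 1) = ((i : ℝ) + 1) ^ p * ((i : ℝ) + 1) ^ d := by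
    rw [← pow_succ, ← pow_add, hd]
  field_simp
  linear_combination (-(∏ s, (a s + i)) / ∏ t, (b t + i)) * hq

theorem tendsto_hgRatio_mul_pow (hpq : p ≤ q + 1) :
    Tendsto (fun i => hgRatio p q a b i * ((i : ℝ) + 1) ^ (q + 1 - p)) atTop (𝓝 1) := by
  have h := (tendsto_finsetProd Finset.univ fun s _ => tendsto_add_div_add_one (a s)).div
    (tendsto_finsetProd Finset.univ fun t _ => tendsto_add_div_add_one (b t)) (by simp)
  rw [Finset.prod_const_one, Finset.prod_const_one, div_one] at h
  exact h.congr fun i => (hgRatio_mul_pow a b hpq i).symm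

theorem tendsto_hgRatio_of_le (hpq : p ≤ q) : Tendsto (hgRatio p q a b) atTop (𝓝 0) := by
  have hinv : Tendsto (fun i : ℕ => (1 / ((i : ℝ) + 1)) ^ (q + 1 - p)) atTop (𝓝 0) := by
    simpa [zero_pow (show q + 1 - p ≠ 0 by omega)] using
      (tendsto_one_div_add_atTop_nhds_zero_nat (𝕜 := ℝ)).pow (q + 1 - p)
  have h := (tendsto_hgRatio_mul_pow a b (by omega)).mul hinv
  rw [one_mul] at h
  refine h.congr fun i => ?_
  rw [mul_assoc, ← mul_pow, mul_one_div_cancel (by positivity), one_pow, mul_one]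

theorem tendsto_hgRatio_of_eq (hpq : p = q + 1) : Tendsto (hgRatio p q a b) atTop (𝓝 1) := by
  simpa [hpq] using tendsto_hgRatio_mul_pow a b hpq.le

theorem summable_hgCoeff_mul_pow (hpq : p ≤ q ∨ p = q + 1) {z : ℝ} (hz : p = q + 1 → |z| < 1) :
    Summable fun i => hgCoeff p q a b i * z ^ i := by
  have hstep (i : ℕ) : hgCoeff p q a b (i + 1) * z ^ (i + 1) =
      hgCoeff p q a b i * z ^ i * (z * hgRatio p q a b i) := by
    rw [hgCoeff_succ, pow_succ]; ring
  rcases hpq with hle | heq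
  · refine summable_of_eq_mul_of_tendsto_norm_lt_one zero_lt_one hstep ?_
    simpa using ((tendsto_hgRatio_of_le a b hle).const_mul z).norm
  · refine summable_of_eq_mul_of_tendsto_norm_lt_one (hz heq) hstep ?_
    simpa using ((tendsto_hgRatio_of_eq a b heq).const_mul z).norm

end Hypergeometric

section PiProd

variable {R κ : Type*} [NormedCommRing R]

theorem summable_norm_prod_pi {n : ℕ} {S : Fin n → κ → R} (h : ∀ j, Summable fun i => ‖S j i‖) :
    Summable fun f : Fin n → κ => ‖∏ j, S j (f j)‖ := by
  induction n with
  | zero => exact (hasSum_fintype _).summable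
  | succ n ih =>
    rw [← (Fin.consEquiv fun _ => κ).summable_iff]
    refine ((h 0).mul_norm (ih fun j => h j.succ)).congr fun f => ?_
    simp [Fin.consEquiv, Fin.prod_univ_succ]

theorem tsum_prod_pi_eq_prod_tsum [CompleteSpace R] {n : ℕ} {S : Fin n → κ → R}
    (h : ∀ j, Summable fun i => ‖S j i‖) :
    ∑' f : Fin n → κ, ∏ j, S j (f j) = ∏ j, ∑' i, S j i := by
  induction n with
  | zero => simp
  | succ n ih =>
    rw [← (Fin.consEquiv fun _ => κ).tsum_eq, Fin.prod_univ_succ, ← ih fun j => h j.succ,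
      tsum_mul_tsum_of_summable_norm (h 0) (summable_norm_prod_pi fun j => h j.succ)]
    simp [Fin.consEquiv, Fin.prod_univ_succ]

end PiProd

section PowDet

variable {R ι : Type*} [CommRing R] [Fintype ι] [DecidableEq ι]

theorem det_of_pow_eq_zero_of_not_injective (y : ι → R) {f : ι → ℕ} (hf : ¬Injective f) :
    (Matrix.of fun r s => y r ^ f s).det = 0 := by
  obtain ⟨s, s', hss', hne⟩ : ∃ s s', f s = f s' ∧ s ≠ s' := by
    simpa [Injective, not_forall] using hf
  exact Matrix.det_zero_of_column_eq hne fun r => by simp [hss']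

theorem det_of_pow_comp_perm (y : ι → R) (f : ι → ℕ) (π : Perm ι) :
    (Matrix.of fun r s => y r ^ f (π s)).det =
      (Perm.sign π : ℤ) * (Matrix.of fun r s => y r ^ f s).det :=
  Matrix.det_permute' π (Matrix.of fun r s => y r ^ f s)

theorem sum_sign_mul_prod_pow_eq_prod_det {κ : Type*} [Fintype κ] [DecidableEq κ]
    (x : κ → ι → R) (c : ℕ → R) (f : ι → ℕ) :
    ∑ σ : κ → Perm ι, (∏ k, ((Perm.sign (σ k) : ℤ) : R)) *
        ∏ j, c (f j) * (∏ k, x k (σ k j)) ^ f j =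
      (∏ j, c (f j)) * ∏ k, (Matrix.of fun r s => x k r ^ f s).det := by
  have hσ (σ : κ → Perm ι) : (∏ k, ((Perm.sign (σ k) : ℤ) : R)) *
        ∏ j, c (f j) * (∏ k, x k (σ k j)) ^ f j =
      (∏ j, c (f j)) * ∏ k, ((Perm.sign (σ k) : ℤ) : R) * ∏ j, x k (σ k j) ^ f j := by
    simp_rw [Finset.prod_mul_distrib, ← Finset.prod_pow, Finset.prod_comm (γ := ι)]
    ring
  simp_rw [hσ, ← Finset.mul_sum, Matrix.det_apply', Fintype.prod_sum]
  rfl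

end PowDet

def strictAntiProdPermEquiv (α : Type*) [LinearOrder α] (n : ℕ) :
    {g : Fin n → α // StrictAnti g} × Perm (Fin n) ≃ {f : Fin n → α // Injective f} where
  toFun gπ := ⟨gπ.1.1 ∘ gπ.2, gπ.1.2.injective.comp gπ.2.injective⟩
  invFun f :=
    let σ := Tuple.sort (OrderDual.toDual ∘ f.1)
    (⟨f.1 ∘ σ, ((monotone_toDual_comp_iff (f := f.1 ∘ σ)).1
      (Tuple.monotone_sort _)).strictAnti_of_injective (f.2.comp σ.injective)⟩, σ⁻¹)
  left_inv := by
    rintro ⟨⟨g, hg⟩, π⟩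
    have hsort : π⁻¹ = Tuple.sort (OrderDual.toDual ∘ g ∘ π) := by
      refine Tuple.eq_sort_iff.2 ⟨?_, fun i j hij heq => ?_⟩
      · simpa [comp_def] using monotone_toDual_comp_iff.2 hg.antitone
      · simp only [Perm.coe_inv, comp_apply, apply_symm_apply, EmbeddingLike.apply_eq_iff_eq] at heq
        exact absurd (hg.injective heq) hij.ne
    refine Prod.ext (Subtype.ext ?_) ?_ <;> dsimp only <;> rw [← hsort]
    · ext; simp
    · exact inv_inv π
  right_inv := by
    rintro ⟨f, hf⟩
    ext s
    simp

theorem tsum_eq_factorial_mul_tsum_strictAnti {α : Type*} [LinearOrder α] {n : ℕ}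
    {W : (Fin n → α) → ℝ} (hW : Summable W) (hinj : ∀ f, ¬Injective f → W f = 0)
    (hperm : ∀ f (π : Perm (Fin n)), W (f ∘ π) = W f) :
    ∑' f, W f = n.factorial * ∑' g : {g : Fin n → α // StrictAnti g}, W g := by
  have hsupp : support W ⊆ {f | Injective f} := fun f hf => by_contra fun h => hf (hinj f h)
  have hsum : Summable fun gπ : {g : Fin n → α // StrictAnti g} × Perm (Fin n) => W gπ.1 :=
    ((strictAntiProdPermEquiv α n).summable_iff.2 (hW.subtype _)).congr fun gπ => hperm _ _
  calc ∑' f, W f = ∑' f : {f : Fin n → α // Injective f}, W f :=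
        (tsum_subtype_eq_of_support_subset hsupp).symm
    _ = ∑' gπ : {g : Fin n → α // StrictAnti g} × Perm (Fin n), W gπ.1 := by
        rw [← (strictAntiProdPermEquiv α n).tsum_eq]
        exact tsum_congr fun gπ => hperm _ _
    _ = n.factorial * ∑' g : {g : Fin n → α // StrictAnti g}, W g := by
        rw [hsum.tsum_prod' fun _ => .of_finite, ← tsum_mul_left]
        simp [tsum_fintype, Fintype.card_perm]

theorem hyperDet_tsum_mul_pow {m n : ℕ} (hm : 0 < m) (c : ℕ → ℝ) (x : Fin (2 * m) → Fin n → ℝ)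
    (hc : ∀ r : Fin (2 * m) → Fin n, Summable fun i => c i * (∏ k, x k (r k)) ^ i) :
    hyperDet m n (fun r => ∑' i, c i * (∏ k, x k (r k)) ^ i) =
      ∑' g : {g : Fin n → ℕ // StrictAnti g},
        (∏ j, c (g.1 j)) * ∏ k, (Matrix.of fun r s => x k r ^ g.1 s).det := by
  set T : (Fin (2 * m) → Perm (Fin n)) → (Fin n → ℕ) → ℝ := fun σ f =>
    (∏ k, ((Perm.sign (σ k) : ℤ) : ℝ)) * ∏ j, c (f j) * (∏ k, x k (σ k j)) ^ f j
  set W : (Fin n → ℕ) → ℝ := fun f =>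
    (∏ j, c (f j)) * ∏ k, (Matrix.of fun r s => x k r ^ f s).det
  have hnorm (σ : Fin (2 * m) → Perm (Fin n)) (j : Fin n) :
      Summable fun i => ‖c i * (∏ k, x k (σ k j)) ^ i‖ :=
    summable_norm_iff.2 (hc fun k => σ k j)
  have hT (σ) : Summable (T σ) :=
    (summable_norm_prod_pi (hnorm σ)).of_norm.mul_left _
  have hTW (f) : ∑ σ, T σ f = W f := sum_sign_mul_prod_pow_eq_prod_det x c f
  have hW : Summable W := (summable_sum fun σ _ => hT σ).congr hTW
  have hinj (f : Fin n → ℕ) (hf : ¬Injective f) : W f = 0 :=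
    mul_eq_zero_of_right _ <| Finset.prod_eq_zero (Finset.mem_univ ⟨0, by omega⟩)
      (det_of_pow_eq_zero_of_not_injective _ hf)
  have hperm (f : Fin n → ℕ) (π : Perm (Fin n)) : W (f ∘ π) = W f := by
    have hsign : ((Perm.sign π : ℤ) : ℝ) ^ (2 * m) = 1 := by
      rcases Int.units_eq_one_or (Perm.sign π) with h | h <;> simp [h, pow_mul]
    simp only [W, comp_apply, det_of_pow_comp_perm, Finset.prod_mul_distrib,
      Finset.prod_const, Finset.card_univ, Fintype.card_fin, hsign, one_mul,
      Equiv.prod_comp π fun j => c (f j)]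
  calc hyperDet m n (fun r => ∑' i, c i * (∏ k, x k (r k)) ^ i)
      = (n.factorial : ℝ)⁻¹ * ∑ σ, ∑' f, T σ f := by
        simp only [hyperDet, T, tsum_mul_left, tsum_prod_pi_eq_prod_tsum (hnorm _)]
    _ = (n.factorial : ℝ)⁻¹ * ∑' f, W f := by
        rw [← Summable.tsum_finsetSum fun σ _ => hT σ]
        simp_rw [hTW]
    _ = _ := by
        rw [tsum_eq_factorial_mul_tsum_strictAnti hW hinj hperm, ← mul_assoc,
          inv_mul_cancel₀ (by positivity), one_mul]

theorem hyperDet_pFq_eq_sum_general (p q : ℕ) (hpq : p ≤ q ∨ p = q + 1)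
    (a : Fin p → ℝ) (b : Fin q → ℝ)
    (m n : ℕ) (hm : 0 < m)
    (x : Fin (2 * m) → Fin n → ℝ)
    (hlt : p = q + 1 → ∀ r : Fin (2 * m) → Fin n, |∏ k : Fin (2 * m), x k (r k)| < 1) :
    hyperDet m n (fun r => pFq p q a b (∏ k : Fin (2 * m), x k (r k))) =
      ∑' i : {f : Fin n → ℕ // StrictAnti f},
        (∏ j : Fin n,
          ((∏ s : Fin p, risingFactorial (a s) (i.1 j)) /
            (∏ t : Fin q, risingFactorial (b t) (i.1 j))) * ((Nat.factorial (i.1 j) : ℝ))⁻¹) *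
          ∏ k : Fin (2 * m), Matrix.det (Matrix.of fun r s : Fin n => x k r ^ (i.1 s)) := by
  simp only [pFq_eq_tsum_hgCoeff_mul_pow]
  exact hyperDet_tsum_mul_pow hm _ x fun r =>
    summable_hgCoeff_mul_pow a b hpq fun h => hlt h r

/-- Expansion of the hyperdeterminant of the generalized hypergeometric kernel as a sum over
strictly decreasing tuples of nonnegative integers of products of generalized Vandermonde
determinants. -/
theorem hyperDet_pFq_eq_sum (p q : ℕ) (hpq : p ≤ q ∨ p = q + 1)
    (a : Fin p → ℝ) (b : Fin q → ℝ) (hb : ∀ t, ∀ i : ℕ, b t ≠ -(i : ℝ))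
    (m n : ℕ) (hm : 0 < m) (hn : 0 < n)
    (x : Fin (2 * m) → Fin n → ℝ)
    (hlt : p = q + 1 → ∀ r : Fin (2 * m) → Fin n, |∏ k : Fin (2 * m), x k (r k)| < 1) :
    hyperDet m n (fun r => pFq p q a b (∏ k : Fin (2 * m), x k (r k))) =
      ∑' i : {f : Fin n → ℕ // StrictAnti f},
        (∏ j : Fin n,
          ((∏ s : Fin p, risingFactorial (a s) (i.1 j)) /
            (∏ t : Fin q, risingFactorial (b t) (i.1 j))) * ((Nat.factorial (i.1 j) : ℝ))⁻¹) *
          ∏ k : Fin (2 * m), Matrix.det (Matrix.of fun r s : Fin n => x k r ^ (i.1 s)) :=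
  hyperDet_pFq_eq_sum_general p q hpq a b m n hm x hlt
end

section
/- (Hyperdeterminantal basic composition formula.) Let μ be a sigma-finite Borel measure on ℝ, let m and d be positive integers, and let φ_{k,r} : ℝ → ℝ, for 1 ≤ k ≤ 2m and 1 ≤ r ≤ d, be measurable functions such that for every tuple (r_1,…,r_{2m}) ∈ {1,…,d}^{2m} the function x ↦ ∏_{k=1}^{2m} φ_{k,r_k}(x) is integrable with respect to μ. Suppose that for each k = 1,…,2m the kernel (t,r) ↦ φ_{k,r}(t) is totally positive of order d, i.e., for every 1 ≤ n ≤ d, all reals t_1 > t_2 > ⋯ > t_n, and all indices d ≥ ρ(1) > ρ(2) > ⋯ > ρ(n) ≥ 1, the determinant det( φ_{k,ρ(r)}(t_s) )_{1≤r,s≤n} is nonnegative. Define A(r_1,…,r_{2m}) = ∫_ℝ ∏_{k=1}^{2m} φ_{k,r_k}(x) dμ(x). Then the array A is hyperdeterminantal totally positive of order d: for every 1 ≤ n ≤ d and all strictly decreasing maps ρ_1,…,ρ_{2m} : {1,…,n} → {1,…,d}, the hyperdeterminant Det( A(ρ_1(r_1),…,ρ_{2m}(r_{2m})) )_{1≤r_1,…,r_{2m}≤n}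 is nonnegative. -/
open scoped BigOperators
open MeasureTheory

/-- Fubini for a product of functions of single coordinates, for a general sigma-finite
measure on `ℝ`. -/
lemma myIntegralProd {n : ℕ} (μ : Measure ℝ) [SigmaFinite μ] (f : Fin n → ℝ → ℝ) :
    ∫ x : Fin n → ℝ, ∏ i, f i (x i) ∂(Measure.pi fun _ => μ) = ∏ i, ∫ x, f i x ∂μ := by
  letI : MeasureSpace ℝ := ⟨μ⟩
  haveI : SigmaFinite (volume : Measure ℝ) := ‹SigmaFinite μ›
  exact MeasureTheory.integral_fin_nat_prod_eq_prod f

lemma myIntegrableProd {n : ℕ} (μ : Measure ℝ) [SigmaFinite μ] (f : Fin n → ℝ → ℝ)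
    (hf : ∀ i, Integrable (f i) μ) :
    Integrable (fun x : Fin n → ℝ => ∏ i, f i (x i)) (Measure.pi fun _ => μ) := by
  letI : MeasureSpace ℝ := ⟨μ⟩
  haveI : SigmaFinite (volume : Measure ℝ) := ‹SigmaFinite μ›
  exact MeasureTheory.Integrable.fin_nat_prod hf

/-- Algebraic identity: the signed sum over tuples of permutations of a product array
equals a product of determinants. -/
lemma mySumPermEqProdDet {N n : ℕ} (B : Fin N → Fin n → Fin n → ℝ) :
    ∑ σ : Fin N → Equiv.Perm (Fin n),
        (∏ k, ((Equiv.Perm.sign (σ k) : ℤ) : ℝ)) * ∏ j, ∏ k, B k (σ k j) j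
      = ∏ k, (Matrix.of fun r s => B k r s).det := by
  have h1 : ∀ σ : Fin N → Equiv.Perm (Fin n),
      (∏ k, ((Equiv.Perm.sign (σ k) : ℤ) : ℝ)) * ∏ j, ∏ k, B k (σ k j) j
        = ∏ k, (((Equiv.Perm.sign (σ k) : ℤ) : ℝ) * ∏ j, B k (σ k j) j) := by
    intro σ
    rw [Finset.prod_comm (f := fun j k => B k (σ k j) j), ← Finset.prod_mul_distrib]
  simp_rw [h1]
  rw [← Fintype.prod_sum
    (f := fun (k : Fin N) (π : Equiv.Perm (Fin n)) =>
      ((Equiv.Perm.sign π : ℤ) : ℝ) * ∏ j, B k (π j) j)]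
  refine Finset.prod_congr rfl fun k _ => ?_
  rw [Matrix.det_apply]
  refine Finset.sum_congr rfl fun π _ => ?_
  simp [Units.smul_def, zsmul_eq_mul]

/-- Hyperdeterminantal basic composition formula: if each of the `2m` kernels
`(t,r) ↦ φ_{k,r}(t)` is totally positive of order `d`, then the array
`A(r₁,…,r_{2m}) = ∫ ∏_k φ_{k,r_k}(x) dμ(x)` is hyperdeterminantal totally positive of
order `d`. -/
theorem hyperDet_basic_composition (m d : ℕ) (hm : 0 < m) (hd : 0 < d)
    (μ : Measure ℝ) [SigmaFinite μ]
    (φ : Fin (2 * m) → Fin d → ℝ → ℝ)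
    (hmeas : ∀ k r, Measurable (φ k r))
    (hint : ∀ r : Fin (2 * m) → Fin d, Integrable (fun x => ∏ k : Fin (2 * m), φ k (r k) x) μ)
    (hTP : ∀ k : Fin (2 * m), ∀ n : ℕ, 0 < n → n ≤ d →
      ∀ t : Fin n → ℝ, StrictAnti t → ∀ ρ : Fin n → Fin d, StrictAnti ρ →
        0 ≤ Matrix.det (Matrix.of fun r s : Fin n => φ k (ρ r) (t s))) :
    ∀ n : ℕ, 0 < n → n ≤ d → ∀ ρ : Fin (2 * m) → Fin n → Fin d,
      (∀ k, StrictAnti (ρ k)) →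
      0 ≤ hyperDet m n (fun r =>
        ∫ x, ∏ k : Fin (2 * m), φ k (ρ k (r k)) x ∂μ) := by
  intro n hn hnd ρ hρ
  unfold hyperDet
  refine mul_nonneg (by positivity) ?_
  set ν : Measure (Fin n → ℝ) := Measure.pi fun _ => μ with hν
  -- pointwise nonnegativity of the product of determinants
  have key : ∀ y : Fin n → ℝ,
      0 ≤ ∏ k, (Matrix.of fun r s : Fin n => φ k (ρ k r) (y s)).det := by
    intro y
    by_cases hy : Function.Injective y
    · -- sort the coordinates to be strictly decreasing
      have hmono : Monotone (y ∘ Tuple.sort y) := Tuple.monotone_sort y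
      have hinj : Function.Injective (y ∘ Tuple.sort y) :=
        hy.comp (Tuple.sort y).injective
      have hsm : StrictMono (y ∘ Tuple.sort y) := hmono.strictMono_of_injective hinj
      set τ : Equiv.Perm (Fin n) := (Fin.revPerm).trans (Tuple.sort y) with hτ
      have hanti : StrictAnti (y ∘ τ) := by
        intro a b hab
        exact hsm (by simpa using (Fin.rev_lt_rev).2 hab)
      have hdet : ∀ k : Fin (2 * m),
          ((Matrix.of fun r s : Fin n => φ k (ρ k r) (y (τ s)))).det
            = ((Equiv.Perm.sign τ : ℤ) : ℝ) *
              ((Matrix.of fun r s : Fin n => φ k (ρ k r) (y s))).det := by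
        intro k
        have := Matrix.det_permute' τ (Matrix.of fun r s : Fin n => φ k (ρ k r) (y s))
        simpa [Matrix.submatrix] using this
      have hnn : ∀ k : Fin (2 * m),
          0 ≤ ((Matrix.of fun r s : Fin n => φ k (ρ k r) (y (τ s)))).det := by
        intro k
        exact hTP k n hn hnd (fun s => y (τ s)) hanti (ρ k) (hρ k)
      have hprod : ∏ k, ((Matrix.of fun r s : Fin n => φ k (ρ k r) (y (τ s)))).det
          = ∏ k, ((Matrix.of fun r s : Fin n => φ k (ρ k r) (y s))).det := by
        simp_rw [hdet]
        rw [Finset.prod_mul_distrib, Finset.prod_const]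
        have hsq : ((Equiv.Perm.sign τ : ℤ) : ℝ) ^ 2 = 1 := by
          rcases Int.units_eq_one_or (Equiv.Perm.sign τ) with h | h <;> simp [h]
        have : ((Equiv.Perm.sign τ : ℤ) : ℝ) ^ ((Finset.univ : Finset (Fin (2*m))).card) = 1 := by
          simp only [Finset.card_univ, Fintype.card_fin]
          rw [pow_mul, hsq, one_pow]
        rw [this, one_mul]
      rw [← hprod]
      exact Finset.prod_nonneg fun k _ => hnn k
    · -- repeated coordinates: every determinant vanishes
      simp only [Function.Injective, not_forall] at hy
      obtain ⟨s₁, s₂, heq, hne⟩ := hy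
      have hzero : ∀ k : Fin (2 * m),
          ((Matrix.of fun r s : Fin n => φ k (ρ k r) (y s)) : Matrix _ _ ℝ).det = 0 := by
        intro k
        exact Matrix.det_zero_of_column_eq hne (fun r => by simp [heq])
      rw [Finset.prod_eq_zero (Finset.mem_univ (⟨0, by omega⟩ : Fin (2 * m)))
        (hzero _)]
  -- rewrite the signed sum as an integral of the product of determinants
  have step : ∀ σ : Fin (2 * m) → Equiv.Perm (Fin n),
      (∏ k, ((Equiv.Perm.sign (σ k) : ℤ) : ℝ)) *
          ∏ j, ∫ x, ∏ k, φ k (ρ k (σ k j)) x ∂μ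
        = ∫ y : Fin n → ℝ, (∏ k, ((Equiv.Perm.sign (σ k) : ℤ) : ℝ)) *
            ∏ j, ∏ k, φ k (ρ k (σ k j)) (y j) ∂ν := by
    intro σ
    rw [integral_const_mul]
    congr 1
    exact (myIntegralProd μ (fun j x => ∏ k, φ k (ρ k (σ k j)) x)).symm
  calc (0:ℝ) ≤ ∫ y : Fin n → ℝ,
        ∏ k, (Matrix.of fun r s : Fin n => φ k (ρ k r) (y s)).det ∂ν :=
        integral_nonneg key
    _ = ∫ y : Fin n → ℝ, ∑ σ : Fin (2 * m) → Equiv.Perm (Fin n),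
          (∏ k, ((Equiv.Perm.sign (σ k) : ℤ) : ℝ)) *
            ∏ j, ∏ k, φ k (ρ k (σ k j)) (y j) ∂ν := by
        congr 1
        funext y
        exact (mySumPermEqProdDet (fun k r s => φ k (ρ k r) (y s))).symm
    _ = ∑ σ : Fin (2 * m) → Equiv.Perm (Fin n), ∫ y : Fin n → ℝ,
          (∏ k, ((Equiv.Perm.sign (σ k) : ℤ) : ℝ)) *
            ∏ j, ∏ k, φ k (ρ k (σ k j)) (y j) ∂ν := by
        refine integral_finset_sum _ fun σ _ => ?_
        exact (myIntegrableProd μ (fun j x => ∏ k, φ k (ρ k (σ k j)) x)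
          (fun j => hint (fun k => ρ k (σ k j)))).const_mul _
    _ = ∑ σ : Fin (2 * m) → Equiv.Perm (Fin n),
          (∏ k, ((Equiv.Perm.sign (σ k) : ℤ) : ℝ)) *
            ∏ j, ∫ x, ∏ k, φ k (ρ k (σ k j)) x ∂μ := by
        exact Finset.sum_congr rfl fun σ _ => (step σ).symm
end

section
/- Let m, n be positive integers and for k = 1,…,2m let x_k = (x_{k,1},…,x_{k,n}) ∈ ℝ^n satisfy x_{k,1} > ⋯ > x_{k,n} ≥ 0, with at least all coordinates nonnegative. Then the hyperdeterminant of the array A(r_1,…,r_{2m}) = exp(x_{1,r_1} x_{2,r_2} ⋯ x_{2m,r_{2m}}) satisfies Det(A) = (∏_{k=1}^{2m} V(x_k)) · ∑_λ (∏_{j=1}^{n} 1/(λ_j + n − j)!) ∏_{k=1}^{2m} s_λ(x_k), every summand on the right-hand side is nonnegative, and the sum is strictly positive; consequently Det(A) > 0. -/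
open scoped BigOperators

/-!
Expanding every exponential in its power series and summing over the permutations first turns
`n! · Det(A)` into `∑_t (∏_j t_j!)⁻¹ ∏_k a_t(x_k)` over all exponent tuples `t`, where
`a_t(x) = det (x_r ^ t_s)` is the alternant. An alternant vanishes unless `t` is injective and
picks up `sgn τ` when `t` is permuted by `τ`; with an even number `2m` of factors the signs cancel,
so the sum collapses onto the strictly decreasing tuples `t = λ + δ`, each counted `n!` times,
and `a_{λ+δ} = s_λ · V`.

The summands are nonnegative because alternants are: for real exponents, `det (x_r ^ μ_s)` has no
zero on the convex set of strictly decreasing positive `x` and strictly decreasing `μ` (a sum of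
`N` distinct powers with `N` positive zeros vanishes identically, by Rolle's theorem), and at the
staircase exponents it is the positive Vandermonde determinant; coordinates equal to `0` are
reached by continuity. The `λ = 0` summand is positive since `s_0 = 1`.
-/

open Finset
open scoped Nat

theorem exists_finset_deriv_eq_zero {s : Set ℝ} (hs : s.OrdConnected) {g g' : ℝ → ℝ}
    (hg : ∀ t ∈ s, HasDerivAt g (g' t) t) {Z : Finset ℝ} (hZ : ↑Z ⊆ s)
    (hgZ : ∀ t ∈ Z, g t = 0) :
    ∃ Z' : Finset ℝ, ↑Z' ⊆ s ∧ (∀ t ∈ Z', g' t = 0) ∧ #Z ≤ #Z' + 1 := by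
  classical
  set P := (Z ×ˢ Z).filter fun p => p.1 < p.2
  have rolle : ∀ p ∈ P, ∃ ξ ∈ Set.Ioo p.1 p.2, g' ξ = 0 := by
    intro p hp
    obtain ⟨⟨ha, hb⟩, hab⟩ : (p.1 ∈ Z ∧ p.2 ∈ Z) ∧ p.1 < p.2 := by simpa [P] using hp
    have hderiv : ∀ t ∈ Set.Icc p.1 p.2, HasDerivAt g (g' t) t :=
      fun t ht => hg t (hs.out (hZ ha) (hZ hb) ht)
    exact exists_hasDerivAt_eq_zero hab
      (fun t ht => (hderiv t ht).continuousAt.continuousWithinAt)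
      ((hgZ _ ha).trans (hgZ _ hb).symm) fun t ht => hderiv t (Set.Ioo_subset_Icc_self ht)
  choose! ξ hξ hξ0 using rolle
  refine ⟨P.image ξ, ?_, ?_, card_le_of_interleaved fun a ha b hb hab _ => ?_⟩
  · intro t ht
    obtain ⟨p, hp, rfl⟩ := mem_image.mp ht
    obtain ⟨⟨ha, hb⟩, -⟩ : (p.1 ∈ Z ∧ p.2 ∈ Z) ∧ p.1 < p.2 := by simpa [P] using hp
    exact hs.out (hZ ha) (hZ hb) (Set.Ioo_subset_Icc_self (hξ p hp))
  · simp only [mem_image]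
    rintro _ ⟨p, hp, rfl⟩
    exact hξ0 p hp
  · have hp : (a, b) ∈ P := by simp [P, ha, hb, hab]
    exact ⟨ξ (a, b), mem_image_of_mem ξ hp, hξ _ hp⟩

theorem eq_zero_of_forall_sum_mul_rpow_eq_zero {ι : Type*} [Fintype ι] {c μ : ι → ℝ}
    (hμ : Function.Injective μ) {Z : Finset ℝ} (hZ : ∀ t ∈ Z, 0 < t)
    (hcard : Fintype.card ι ≤ #Z) (hcZ : ∀ t ∈ Z, ∑ j, c j * t ^ μ j = 0) : c = 0 := by
  classical
  obtain ⟨N, hN⟩ : ∃ N, Fintype.card ι = N := ⟨_, rfl⟩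
  induction N generalizing ι Z with
  | zero =>
    have := Fintype.card_eq_zero_iff.mp hN
    exact Subsingleton.elim _ _
  | succ N ih =>
    obtain ⟨j₀⟩ : Nonempty ι := Fintype.card_pos_iff.mp (by omega)
    -- dividing by `t ^ μ j₀` kills the `j₀` term of the derivative
    set ν : ι → ℝ := fun j => μ j - μ j₀
    have hg : ∀ t ∈ Set.Ioi 0, HasDerivAt (fun t => ∑ j, c j * t ^ ν j)
        (∑ j, c j * ν j * t ^ (ν j - 1)) t := by
      intro t ht
      exact (HasDerivAt.fun_sum fun j _ =>
        (Real.hasDerivAt_rpow_const (p := ν j) (Or.inl (ne_of_gt ht))).const_mul (c j)).congr_deriv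
        (sum_congr rfl fun j _ => by ring)
    have hgZ : ∀ t ∈ Z, ∑ j, c j * t ^ ν j = 0 := by
      intro t ht
      have hdiv : ∑ j, c j * t ^ ν j = (∑ j, c j * t ^ μ j) / t ^ μ j₀ := by
        rw [sum_div]
        exact sum_congr rfl fun j _ => by rw [Real.rpow_sub (hZ t ht)]; ring
      rw [hdiv, hcZ t ht, zero_div]
    obtain ⟨Z', hZ'0, hZ', hcardZ'⟩ :=
      exists_finset_deriv_eq_zero Set.ordConnected_Ioi hg (fun t ht => hZ t ht) hgZ
    have hν : ∀ j, j ≠ j₀ → ν j ≠ 0 := fun j hj => sub_ne_zero.mpr (hμ.ne hj)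
    have hrest : ∀ j : {j // j ≠ j₀}, c j * ν j = 0 := by
      refine congrFun (ih (c := fun j : {j // j ≠ j₀} => c j * ν j) (μ := fun j => ν j - 1)
        (fun a b hab => Subtype.ext (hμ (by simpa [ν] using hab)))
        (fun t ht => hZ'0 ht) ?_ ?_ ?_)
      · rw [Fintype.card_subtype_compl, Fintype.card_subtype_eq]; omega
      · intro t ht
        rw [← hZ' t ht, Fintype.sum_eq_add_sum_subtype_ne _ j₀]
        simp [ν]
      · rw [Fintype.card_subtype_compl, Fintype.card_subtype_eq]; omega
    have hc : ∀ j, j ≠ j₀ → c j = 0 := fun j hj =>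
      (mul_eq_zero.mp (hrest ⟨j, hj⟩)).resolve_right (hν j hj)
    obtain ⟨t, ht⟩ : Z.Nonempty := card_pos.mp (by omega)
    have hcj₀ : c j₀ * t ^ μ j₀ = 0 := by
      rw [← hcZ t ht, Fintype.sum_eq_add_sum_subtype_ne _ j₀]
      simp [fun j : {j // j ≠ j₀} => hc j j.2]
    funext j
    obtain rfl | hj := eq_or_ne j j₀
    · exact (mul_eq_zero.mp hcj₀).resolve_right (Real.rpow_pos_of_pos (hZ t ht) _).ne'
    · exact hc j hj

theorem det_rpow_ne_zero {ι : Type*} [Fintype ι] [DecidableEq ι] {x μ : ι → ℝ}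
    (hx : Function.Injective x) (hx0 : ∀ r, 0 < x r) (hμ : Function.Injective μ) :
    (Matrix.of fun r s => x r ^ μ s).det ≠ 0 := by
  intro hdet
  obtain ⟨c, hc0, hc⟩ := Matrix.exists_mulVec_eq_zero_iff.mpr hdet
  refine hc0 (eq_zero_of_forall_sum_mul_rpow_eq_zero hμ (Z := univ.image x) ?_ ?_ ?_)
  · simpa using hx0
  · rw [card_image_of_injective _ hx, card_univ]
  · simp only [mem_image, mem_univ, true_and, forall_exists_index, forall_apply_eq_imp_iff]
    intro r
    simpa [Matrix.mulVec, dotProduct, mul_comm] using congrFun hc r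

theorem convex_setOf_strictAnti {ι : Type*} [Preorder ι] :
    Convex ℝ {f : ι → ℝ | StrictAnti f} := by
  intro u hu v hv a b ha hb hab i j hij
  have hu' := hu hij
  have hv' := hv hij
  simp only [Pi.add_apply, Pi.smul_apply, smul_eq_mul]
  rcases ha.eq_or_lt with rfl | ha
  · rw [zero_add] at hab
    simpa [hab] using hv'
  · nlinarith [mul_lt_mul_of_pos_left hu' ha, mul_le_mul_of_nonneg_left hv'.le hb]

def alternant {ι R : Type*} [Fintype ι] [DecidableEq ι] [CommRing R] (x : ι → R)
    (μ : ι → ℕ) : R :=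
  (Matrix.of fun r s => x r ^ μ s).det

theorem alternant_staircase {n : ℕ} (x : Fin n → ℝ) :
    alternant x (fun s => n - 1 - s) = vandermonde n x := by
  have h : (Matrix.of fun r s : Fin n => x r ^ (n - 1 - s : ℕ)) = Matrix.projVandermonde 1 x := by
    ext r s
    simp [Matrix.projVandermonde_apply, Fin.val_rev, Nat.sub_sub, add_comm]
  rw [alternant, h, Matrix.det_projVandermonde]
  simp [vandermonde]

theorem vandermonde_pos {n : ℕ} {x : Fin n → ℝ} (hx : StrictAnti x) : 0 < vandermonde n x :=
  prod_pos fun _ _ => prod_pos fun _ hs => sub_pos.mpr (hx (mem_Ioi.mp hs))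

theorem det_rpow_pos {n : ℕ} {x μ : Fin n → ℝ} (hx : StrictAnti x) (hx0 : ∀ r, 0 < x r)
    (hμ : StrictAnti μ) : 0 < (Matrix.of fun r s => x r ^ μ s).det := by
  set F : (Fin n → ℝ) × (Fin n → ℝ) → ℝ := fun p => (Matrix.of fun r s => p.1 r ^ p.2 s).det
  set S := ({f : Fin n → ℝ | StrictAnti f} ∩ Set.univ.pi fun _ => Set.Ioi 0) ×ˢ
    {f : Fin n → ℝ | StrictAnti f}
  have hS : IsPreconnected S :=
    ((convex_setOf_strictAnti.inter (convex_pi fun _ _ => convex_Ioi 0)).prod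
      convex_setOf_strictAnti).isPreconnected
  have hF : ContinuousOn F S := by
    refine continuous_id.matrix_det.comp_continuousOn <|
      continuousOn_pi.2 fun r => continuousOn_pi.2 fun s => fun p hp => ?_
    exact ContinuousAt.continuousWithinAt (f := fun p : (Fin n → ℝ) × (Fin n → ℝ) => p.1 r ^ p.2 s)
      (.rpow (by fun_prop) (by fun_prop) (Or.inl (hp.1.2 r trivial).ne'))
  set p₀ : (Fin n → ℝ) × (Fin n → ℝ) := (fun r => n - r, fun s => ((n - 1 - s : ℕ) : ℝ))
  have hp₀ : p₀ ∈ S := by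
    refine ⟨⟨fun i j hij => ?_, fun j _ => ?_⟩, fun i j hij => ?_⟩
    · simpa [p₀] using hij
    · simp [p₀, j.is_lt]
    · simp only [p₀]; exact_mod_cast (by omega : n - 1 - j < n - 1 - i)
  have hFp₀ : 0 < F p₀ := by
    have : F p₀ = alternant p₀.1 (fun s => n - 1 - s) := by
      simp only [F, p₀, alternant, Real.rpow_natCast]
    rw [this, alternant_staircase]
    exact vandermonde_pos hp₀.1.1
  have hxμ : (x, μ) ∈ S := ⟨⟨hx, fun j _ => hx0 j⟩, hμ⟩
  by_contra! hneg
  obtain ⟨p, hp, hp0⟩ := hS.intermediate_value hxμ hp₀ hF ⟨hneg, hFp₀.le⟩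
  exact det_rpow_ne_zero hp.1.1.injective (fun r => hp.1.2 r trivial) hp.2.injective hp0

theorem alternant_pos {n : ℕ} {x : Fin n → ℝ} {μ : Fin n → ℕ} (hx : StrictAnti x)
    (hx0 : ∀ r, 0 < x r) (hμ : StrictAnti μ) : 0 < alternant x μ := by
  simpa [alternant, Real.rpow_natCast] using
    det_rpow_pos (μ := fun s => (μ s : ℝ)) hx hx0 fun _ _ h => Nat.cast_lt.mpr (hμ h)

theorem alternant_nonneg {n : ℕ} {x : Fin n → ℝ} {μ : Fin n → ℕ} (hx : StrictAnti x)
    (hx0 : ∀ r, 0 ≤ x r) (hμ : StrictAnti μ) : 0 ≤ alternant x μ := by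
  have hcont : Continuous fun ε : ℝ => alternant (fun r => x r + ε) μ :=
    Continuous.matrix_det <| continuous_pi fun r => continuous_pi fun s => by fun_prop
  have hpos : ∀ ε ∈ Set.Ioi (0 : ℝ), 0 ≤ alternant (fun r => x r + ε) μ := fun ε hε =>
    (alternant_pos (fun i j h => add_lt_add_left (hx h) ε)
      (fun r => add_pos_of_nonneg_of_pos (hx0 r) hε) hμ).le
  simpa using ge_of_tendsto (hcont.continuousWithinAt (s := Set.Ioi 0) (x := 0))
    (eventually_nhdsWithin_of_forall hpos)

theorem alternant_comp_perm {ι R : Type*} [Fintype ι] [DecidableEq ι] [CommRing R]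
    (x : ι → R) (μ : ι → ℕ) (τ : Equiv.Perm ι) :
    alternant x (μ ∘ τ) = Equiv.Perm.sign τ * alternant x μ :=
  Matrix.det_permute' τ (Matrix.of fun r s => x r ^ μ s)

theorem alternant_eq_zero_of_not_injective {ι R : Type*} [Fintype ι] [DecidableEq ι]
    [CommRing R] (x : ι → R) {μ : ι → ℕ} (hμ : ¬ Function.Injective μ) :
    alternant x μ = 0 := by
  obtain ⟨i, j, hij, hne⟩ := Function.not_injective_iff.mp hμ
  exact Matrix.det_zero_of_column_eq hne fun r => by simp [hij]

theorem sum_sign_mul_prod_pow {ι R : Type*} [Fintype ι] [DecidableEq ι] [CommRing R]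
    (x : ι → R) (μ : ι → ℕ) :
    ∑ σ : Equiv.Perm ι, Equiv.Perm.sign σ * ∏ j, x (σ j) ^ μ j = alternant x μ :=
  (Matrix.det_apply' (Matrix.of fun r s => x r ^ μ s)).symm

def addStaircase {n : ℕ} (lam : Fin n → ℕ) : Fin n → ℕ := fun j => lam j + (n - 1 - j)

theorem Antitone.strictAnti_addStaircase {n : ℕ} {lam : Fin n → ℕ} (hlam : Antitone lam) :
    StrictAnti (addStaircase lam) := fun i j hij => by
  have := hlam hij.le
  have : (i : ℕ) < j := hij
  simp only [addStaircase]
  omega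

theorem StrictAnti.antitone_add_val {n : ℕ} {s : Fin n → ℕ} (hs : StrictAnti s) :
    Antitone fun j => s j + j := by
  cases n with
  | zero => exact fun i => i.elim0
  | succ n =>
    refine Fin.antitone_iff_succ_le.2 fun i => ?_
    have := hs (Fin.castSucc_lt_succ (i := i))
    simp only [Fin.val_succ, Fin.val_castSucc]
    omega

def antitoneEquivStrictAnti (n : ℕ) :
    {lam : Fin n → ℕ // Antitone lam} ≃ {s : Fin n → ℕ // StrictAnti s} where
  toFun lam := ⟨addStaircase lam.1, lam.2.strictAnti_addStaircase⟩
  invFun s := ⟨fun j => s.1 j + j - (n - 1), fun i j hij =>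
    Nat.sub_le_sub_right (s.2.antitone_add_val hij) _⟩
  left_inv lam := by
    ext j
    simp only [addStaircase]
    omega
  right_inv s := by
    ext j
    have hj := j.is_lt
    have : s.1 ⟨n - 1, by omega⟩ + (n - 1) ≤ s.1 j + j :=
      s.2.antitone_add_val (Fin.le_def.2 (by dsimp only; omega))
    simp only [addStaircase]
    omega

theorem schur_eq_alternant_div {n : ℕ} (lam : Fin n → ℕ) (x : Fin n → ℝ) :
    schur n lam x = alternant x (addStaircase lam) / vandermonde n x := rfl

theorem schur_nonneg {n : ℕ} {lam : Fin n → ℕ} (hlam : Antitone lam) {x : Fin n → ℝ}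
    (hx : StrictAnti x) (hx0 : ∀ r, 0 ≤ x r) : 0 ≤ schur n lam x :=
  div_nonneg (alternant_nonneg hx hx0 hlam.strictAnti_addStaircase) (vandermonde_pos hx).le

theorem schur_zero {n : ℕ} {x : Fin n → ℝ} (hx : StrictAnti x) : schur n 0 x = 1 := by
  have h0 : addStaircase (0 : Fin n → ℕ) = fun s : Fin n => n - 1 - s := funext fun _ => zero_add _
  rw [schur_eq_alternant_div, h0, alternant_staircase]
  exact div_self (vandermonde_pos hx).ne'

theorem hasSum_prod_pi_of_nonneg {β : Type*} {p : ℕ} {f : Fin p → β → ℝ} {a : Fin p → ℝ}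
    (hf : ∀ j, HasSum (f j) (a j)) (hf0 : ∀ j t, 0 ≤ f j t) :
    HasSum (fun t : Fin p → β => ∏ j, f j (t j)) (∏ j, a j) := by
  induction p with
  | zero => simp
  | succ p ih =>
    have htail := ih (fun j => hf j.succ) (fun j => hf0 j.succ)
    have hsum := (hf 0).summable.mul_of_nonneg htail.summable (fun t => hf0 0 t) fun t =>
      prod_nonneg fun j _ => hf0 j.succ (t j)
    have hmul := (hf 0).mul htail hsum
    rw [← (Fin.consEquiv fun _ => β).hasSum_iff]
    simpa [Function.comp_def, Fin.prod_univ_succ] using hmul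

theorem hasSum_prod_pow_div_factorial {n : ℕ} (c : Fin n → ℝ) (hc : ∀ j, 0 ≤ c j) :
    HasSum (fun t : Fin n → ℕ => ∏ j, c j ^ t j / (t j)!) (∏ j, Real.exp (c j)) :=
  hasSum_prod_pi_of_nonneg (f := fun j k => c j ^ k / k !)
    (fun j => by rw [Real.exp_eq_exp_ℝ]; exact NormedSpace.expSeries_div_hasSum_exp (c j))
    fun j t => by have := hc j; positivity

theorem sum_prod_sign_mul_prod_pow {κ ι R : Type*} [Fintype κ] [DecidableEq κ] [Fintype ι]
    [DecidableEq ι] [CommRing R] (x : κ → ι → R) (t : ι → ℕ) :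
    ∑ σ : κ → Equiv.Perm ι, (∏ k, (Equiv.Perm.sign (σ k) : R)) * ∏ j, (∏ k, x k (σ k j)) ^ t j =
      ∏ k, alternant (x k) t := by
  simp_rw [← sum_sign_mul_prod_pow]
  rw [Fintype.prod_sum]
  refine sum_congr rfl fun σ _ => ?_
  rw [prod_mul_distrib]
  simp_rw [← prod_pow]
  rw [prod_comm]

theorem exists_strictAnti_comp_perm_eq {α : Type*} [LinearOrder α] {n : ℕ} {t : Fin n → α}
    (ht : Function.Injective t) :
    ∃ (s : Fin n → α) (τ : Equiv.Perm (Fin n)), StrictAnti s ∧ s ∘ τ = t := by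
  set ρ := Tuple.sort t * Fin.revPerm
  have hmono : StrictMono (t ∘ Tuple.sort t) :=
    (Tuple.monotone_sort t).strictMono_of_injective (ht.comp (Equiv.injective _))
  refine ⟨t ∘ ρ, ρ⁻¹, fun i j hij => hmono (Fin.rev_lt_rev.mpr hij), ?_⟩
  ext j
  simp

theorem injective_strictAnti_comp_perm {α : Type*} [LinearOrder α] {n : ℕ} :
    Function.Injective fun p : {s : Fin n → α // StrictAnti s} × Equiv.Perm (Fin n) =>
      p.1.1 ∘ p.2 := by
  rintro ⟨⟨s, hs⟩, τ⟩ ⟨⟨s', hs'⟩, τ'⟩ h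
  dsimp only at h
  have hss' : s = s' := by
    rw [← hs.range_inj hs', ← τ.surjective.range_comp, h, τ'.surjective.range_comp]
  subst hss'
  exact Prod.ext rfl (Equiv.ext fun j => hs.injective (congrFun h j))

theorem HasSum.strictAnti_of_perm_invariant {α M : Type*} [LinearOrder α] [AddCommMonoid M]
    [TopologicalSpace M] [ContinuousAdd M] [RegularSpace M] {n : ℕ} {G : (Fin n → α) → M} {a : M}
    (hG : HasSum G a) (hzero : ∀ t, ¬ Function.Injective t → G t = 0)
    (hperm : ∀ t (τ : Equiv.Perm (Fin n)), G (t ∘ τ) = G t) :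
    HasSum (fun s : {s : Fin n → α // StrictAnti s} => n ! • G s) a := by
  have hcomp := (injective_strictAnti_comp_perm.hasSum_iff fun t ht => hzero t fun hinj => ht <| by
    obtain ⟨s, τ, hs, rfl⟩ := exists_strictAnti_comp_perm_eq hinj
    exact ⟨(⟨s, hs⟩, τ), rfl⟩).mpr hG
  refine hcomp.prod_fiberwise fun s => ?_
  simpa [hperm, Fintype.card_perm] using hasSum_fintype fun τ : Equiv.Perm (Fin n) => G (s.1 ∘ τ)

noncomputable def hyperDetExpTerm {κ : Type*} [Fintype κ] {n : ℕ} (x : κ → Fin n → ℝ)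
    (t : Fin n → ℕ) : ℝ :=
  (∏ j, ((t j)! : ℝ))⁻¹ * ∏ k, alternant (x k) t

theorem hasSum_hyperDetExpTerm {m n : ℕ} {x : Fin (2 * m) → Fin n → ℝ}
    (hx0 : ∀ k j, 0 ≤ x k j) :
    HasSum (hyperDetExpTerm x) (n ! * hyperDet m n fun r => Real.exp (∏ k, x k (r k))) := by
  rw [hyperDet, mul_inv_cancel_left₀ (by positivity)]
  have hσ := hasSum_sum (s := univ) fun (σ : Fin (2 * m) → Equiv.Perm (Fin n)) _ =>
    (hasSum_prod_pow_div_factorial (fun j => ∏ k, x k (σ k j))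
      fun j => prod_nonneg fun k _ => hx0 k _).mul_left (∏ k, ((Equiv.Perm.sign (σ k) : ℤ) : ℝ))
  suffices hterm : (fun t => ∑ σ : Fin (2 * m) → Equiv.Perm (Fin n),
      (∏ k, ((Equiv.Perm.sign (σ k) : ℤ) : ℝ)) * ∏ j, (∏ k, x k (σ k j)) ^ t j / (t j)!) =
      hyperDetExpTerm x by rwa [hterm] at hσ
  funext t
  simp_rw [prod_div_distrib, div_eq_inv_mul, mul_left_comm _ (_⁻¹), ← mul_sum]
  rw [hyperDetExpTerm, sum_prod_sign_mul_prod_pow x t]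

theorem hyperDetExpTerm_comp_perm {κ : Type*} [Fintype κ] {n : ℕ} (x : κ → Fin n → ℝ)
    (hκ : Even (Fintype.card κ)) (t : Fin n → ℕ) (τ : Equiv.Perm (Fin n)) :
    hyperDetExpTerm x (t ∘ τ) = hyperDetExpTerm x t := by
  have hsign : ((Equiv.Perm.sign τ : ℤ) : ℝ) ^ Fintype.card κ = 1 := by
    rcases Int.units_eq_one_or (Equiv.Perm.sign τ) with h | h <;> simp [h, hκ.neg_one_pow]
  simp only [hyperDetExpTerm, alternant_comp_perm, prod_mul_distrib, prod_const, card_univ,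
    hsign, one_mul, Function.comp_apply]
  rw [Equiv.prod_comp τ fun j => ((t j)! : ℝ)]

theorem hyperDetExpTerm_eq_zero {κ : Type*} [Fintype κ] [Nonempty κ] {n : ℕ}
    (x : κ → Fin n → ℝ) {t : Fin n → ℕ} (ht : ¬ Function.Injective t) :
    hyperDetExpTerm x t = 0 := by
  rw [hyperDetExpTerm, prod_eq_zero (mem_univ (Classical.arbitrary κ))
    (alternant_eq_zero_of_not_injective _ ht), mul_zero]

noncomputable def schurExpansionTerm {κ : Type*} [Fintype κ] {n : ℕ} (x : κ → Fin n → ℝ)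
    (lam : Fin n → ℕ) : ℝ :=
  (∏ j, ((lam j + (n - 1 - j))! : ℝ))⁻¹ * ∏ k, schur n lam (x k)

theorem hyperDetExpTerm_addStaircase {κ : Type*} [Fintype κ] {n : ℕ} {x : κ → Fin n → ℝ}
    (hx : ∀ k, vandermonde n (x k) ≠ 0) (lam : Fin n → ℕ) :
    hyperDetExpTerm x (addStaircase lam) =
      (∏ k, vandermonde n (x k)) * schurExpansionTerm x lam := by
  have hV : ∏ k, vandermonde n (x k) ≠ 0 := prod_ne_zero_iff.mpr fun k _ => hx k
  simp only [hyperDetExpTerm, schurExpansionTerm, schur_eq_alternant_div, prod_div_distrib]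
  field_simp
  exact mul_comm _ _

theorem schurExpansionTerm_nonneg {κ : Type*} [Fintype κ] {n : ℕ} {x : κ → Fin n → ℝ}
    (hx : ∀ k, StrictAnti (x k)) (hx0 : ∀ k j, 0 ≤ x k j) {lam : Fin n → ℕ}
    (hlam : Antitone lam) : 0 ≤ schurExpansionTerm x lam :=
  mul_nonneg (by positivity) (prod_nonneg fun k _ => schur_nonneg hlam (hx k) (hx0 k))

theorem schurExpansionTerm_zero_pos {κ : Type*} [Fintype κ] {n : ℕ} {x : κ → Fin n → ℝ}
    (hx : ∀ k, StrictAnti (x k)) : 0 < schurExpansionTerm x 0 := by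
  simp only [schurExpansionTerm, schur_zero (hx _), prod_const_one, mul_one]
  positivity

theorem hasSum_schurExpansionTerm {m n : ℕ} (hm : 0 < m) {x : Fin (2 * m) → Fin n → ℝ}
    (hx : ∀ k, StrictAnti (x k)) (hx0 : ∀ k j, 0 ≤ x k j) :
    HasSum (fun lam : {f : Fin n → ℕ // Antitone f} => schurExpansionTerm x lam.1)
      ((hyperDet m n fun r => Real.exp (∏ k, x k (r k))) / ∏ k, vandermonde n (x k)) := by
  have : Nonempty (Fin (2 * m)) := ⟨⟨0, by omega⟩⟩
  have hV : ∏ k, vandermonde n (x k) ≠ 0 :=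
    prod_ne_zero_iff.mpr fun k _ => (vandermonde_pos (hx k)).ne'
  have hstrict := (hasSum_hyperDetExpTerm hx0).strictAnti_of_perm_invariant
    (fun t => hyperDetExpTerm_eq_zero x) (hyperDetExpTerm_comp_perm x (by simp))
  simp only [nsmul_eq_mul] at hstrict
  have hpart := (antitoneEquivStrictAnti n).hasSum_iff.mpr
    ((hasSum_mul_left_iff (by positivity)).mp hstrict)
  simp only [Function.comp_def, antitoneEquivStrictAnti, Equiv.coe_fn_mk,
    hyperDetExpTerm_addStaircase fun k => (vandermonde_pos (hx k)).ne'] at hpart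
  exact (hasSum_mul_left_iff hV).mp (by rwa [mul_div_cancel₀ _ hV])

theorem hyperDet_exp_schur_expansion_pos_general (m n : ℕ) (hm : 0 < m)
    (x : Fin (2 * m) → Fin n → ℝ) (hanti : ∀ k, StrictAnti (x k))
    (hnonneg : ∀ k j, 0 ≤ x k j) :
    hyperDet m n (fun r => Real.exp (∏ k : Fin (2 * m), x k (r k))) =
      (∏ k : Fin (2 * m), vandermonde n (x k)) *
        (∑' lam : {f : Fin n → ℕ // Antitone f},
          (∏ j : Fin n, ((Nat.factorial (lam.1 j + (n - 1 - (j : ℕ))) : ℝ)))⁻¹ *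
            ∏ k : Fin (2 * m), schur n lam.1 (x k)) ∧
    (∀ lam : {f : Fin n → ℕ // Antitone f},
      0 ≤ (∏ j : Fin n, ((Nat.factorial (lam.1 j + (n - 1 - (j : ℕ))) : ℝ)))⁻¹ *
            ∏ k : Fin (2 * m), schur n lam.1 (x k)) ∧
    (0 < ∑' lam : {f : Fin n → ℕ // Antitone f},
          (∏ j : Fin n, ((Nat.factorial (lam.1 j + (n - 1 - (j : ℕ))) : ℝ)))⁻¹ *
            ∏ k : Fin (2 * m), schur n lam.1 (x k)) ∧
    0 < hyperDet m n (fun r => Real.exp (∏ k : Fin (2 * m), x k (r k))) := by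
  have hV : 0 < ∏ k, vandermonde n (x k) := prod_pos fun k _ => vandermonde_pos (hanti k)
  have hsum := hasSum_schurExpansionTerm hm hanti hnonneg
  have hterm_nonneg : ∀ lam : {f : Fin n → ℕ // Antitone f}, 0 ≤ schurExpansionTerm x lam.1 :=
    fun lam => schurExpansionTerm_nonneg hanti hnonneg lam.2
  have hsum_pos : 0 < ∑' lam : {f : Fin n → ℕ // Antitone f}, schurExpansionTerm x lam.1 :=
    hsum.summable.tsum_pos hterm_nonneg ⟨0, antitone_const⟩ (schurExpansionTerm_zero_pos hanti)
  have hdet : hyperDet m n (fun r => Real.exp (∏ k, x k (r k))) =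
      (∏ k, vandermonde n (x k)) * ∑' lam : {f : Fin n → ℕ // Antitone f},
        schurExpansionTerm x lam.1 := by
    rw [hsum.tsum_eq, mul_div_cancel₀ _ hV.ne']
  exact ⟨hdet, hterm_nonneg, hsum_pos, hdet ▸ mul_pos hV hsum_pos⟩

/-- For strictly decreasing vectors with nonnegative coordinates, the hyperdeterminant of the
array `exp(x_{1,r₁} ⋯ x_{2m,r_{2m}})` has a Schur-function expansion with nonnegative
summands whose sum is strictly positive; consequently the hyperdeterminant is strictly
positive. -/
theorem hyperDet_exp_schur_expansion_pos (m n : ℕ) (hm : 0 < m) (hn : 0 < n)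
    (x : Fin (2 * m) → Fin n → ℝ) (hanti : ∀ k, StrictAnti (x k))
    (hnonneg : ∀ k j, 0 ≤ x k j) :
    hyperDet m n (fun r => Real.exp (∏ k : Fin (2 * m), x k (r k))) =
      (∏ k : Fin (2 * m), vandermonde n (x k)) *
        (∑' lam : {f : Fin n → ℕ // Antitone f},
          (∏ j : Fin n, ((Nat.factorial (lam.1 j + (n - 1 - (j : ℕ))) : ℝ)))⁻¹ *
            ∏ k : Fin (2 * m), schur n lam.1 (x k)) ∧
    (∀ lam : {f : Fin n → ℕ // Antitone f},
      0 ≤ (∏ j : Fin n, ((Nat.factorial (lam.1 j + (n - 1 - (j : ℕ))) : ℝ)))⁻¹ *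
            ∏ k : Fin (2 * m), schur n lam.1 (x k)) ∧
    (0 < ∑' lam : {f : Fin n → ℕ // Antitone f},
          (∏ j : Fin n, ((Nat.factorial (lam.1 j + (n - 1 - (j : ℕ))) : ℝ)))⁻¹ *
            ∏ k : Fin (2 * m), schur n lam.1 (x k)) ∧
    0 < hyperDet m n (fun r => Real.exp (∏ k : Fin (2 * m), x k (r k))) :=
  hyperDet_exp_schur_expansion_pos_general m n hm x hanti hnonneg
end
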